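/- arXiv:1901.01509 — 8 statements merged into one kernel-verified Lean document; each statement's English description precedes it below -/
import Mathlib

section
/- Let $G^{\triangle}_t$ be the star triangle obtained by joining $t \geq 1$ triangles at a common vertex $x_v$, so $V = \{x_v, x_1, \ldots, x_{2t}\}$ with edges $\{x_v, x_{2k-1}\}, \{x_v, x_{2k}\}, \{x_{2k-1}, x_{2k}\}$ for $1 \leq k \leq t$. Then the Hilbert series of $S/I(G^{\triangle}_t)$ equals $\frac{(1+\lambda)^t + \lambda(1-\lambda)^{t-1}}{(1-\lambda)^t}$. -/
/-!
The quotient of a polynomial ring by a monomial ideal has the standard monomials (those divisible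
by no generator) as a basis, so its Hilbert series counts standard monomials by degree; for an edge
ideal these are the monomials whose support is an independent set. An independent set of the star
triangle is either the apex alone or contains at most one outer vertex of each triangle. So a
standard monomial is either a positive power of the apex, counted by `λ/(1-λ)`, or a choice, for
each triangle independently, of a power of one of its two outer vertices, counted by
`((1+λ)/(1-λ))^t`.
-/

open MvPolynomial

/-- The edge ideal of a finite simple graph. -/
noncomputable def edgeIdeal (K : Type) [Field K] {V : Type} (G : SimpleGraph V) :
    Ideal (MvPolynomial V K) :=
  Ideal.span {p | ∃ v w, G.Adj v w ∧ p = X v * X w}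

/-- The Hilbert series of `S/I`, where `S = K[x_v : v ∈ σ]`:
the power series whose `d`-th coefficient is the `K`-dimension of the degree-`d`
graded piece of `S/I` (the image of the homogeneous polynomials of degree `d`). -/
noncomputable def hilbertSeries (K : Type) [Field K] {σ : Type} [Fintype σ]
    (I : Ideal (MvPolynomial σ K)) : PowerSeries ℚ :=
  PowerSeries.mk fun d =>
    (Module.finrank K ((MvPolynomial.homogeneousSubmodule σ K d).map
      (Ideal.Quotient.mkₐ K I).toLinearMap) : ℚ)

/-- The star triangle: `t` triangles `{0, 2k-1, 2k}` (`1 ≤ k ≤ t`) joined at the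
common vertex `0`. -/
def starTriangle (t : ℕ) : SimpleGraph (Fin (2 * t + 1)) :=
  SimpleGraph.fromRel fun a b => a = 0 ∨ ((a : ℕ) + 1) / 2 = ((b : ℕ) + 1) / 2

section MonomialIdeal

variable {K σ : Type*} [Field K]

theorem finrank_map_homogeneousSubmodule_span_monomial (E : Set (σ →₀ ℕ)) (d : ℕ) :
    Module.finrank K ((homogeneousSubmodule σ K d).map
      (Ideal.Quotient.mkₐ K (Ideal.span ((fun s => monomial s (1 : K)) '' E))).toLinearMap) =
      Nat.card {m : σ →₀ ℕ // m.degree = d ∧ ∀ e ∈ E, ¬ e ≤ m} := by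
  set I := Ideal.span ((fun s => monomial s (1 : K)) '' E)
  set f := (Ideal.Quotient.mkₐ K I).toLinearMap
  set S : Set (σ →₀ ℕ) := {m | m.degree = d ∧ ∀ e ∈ E, ¬ e ≤ m}
  have hmap : (homogeneousSubmodule σ K d).map f = (restrictSupport K S).map f := by
    rw [homogeneousSubmodule_eq_finsupp_supported, ← restrictSupport]
    refine le_antisymm ?_ (Submodule.map_mono (restrictSupport_mono K fun m hm => hm.1))
    rw [restrictSupport_eq_span, Submodule.map_span, Submodule.span_le]
    rintro _ ⟨_, ⟨m, hm, rfl⟩, rfl⟩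
    by_cases hdiv : ∃ e ∈ E, e ≤ m
    · have hI : monomial m (1 : K) ∈ I := mem_ideal_span_monomial_image.2 fun m' hm' => by
        rwa [Finset.mem_singleton.1 (support_monomial_subset hm')]
      rw [SetLike.mem_coe, show f (monomial m 1) = 0 from Ideal.Quotient.eq_zero_iff_mem.2 hI]
      exact zero_mem _
    · refine Submodule.mem_map_of_mem ((monomial_mem_restrictSupport K).2 (Or.inl ⟨hm, ?_⟩))
      exact fun e he hle => hdiv ⟨e, he, hle⟩
  have hinj : Function.Injective (f ∘ₗ (restrictSupport K S).subtype) := by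
    rw [← LinearMap.ker_eq_bot, Submodule.eq_bot_iff]
    rintro ⟨p, hp⟩ hfp
    have hpI : p ∈ I := Ideal.Quotient.eq_zero_iff_mem.1 hfp
    suffices p.support = ∅ by simpa [Submodule.mk_eq_zero, support_eq_empty] using this
    refine Finset.eq_empty_of_forall_notMem fun m hm => ?_
    obtain ⟨e, he, hle⟩ := mem_ideal_span_monomial_image.1 hpI m hm
    exact (hp hm).2 e he hle
  rw [hmap, ← Submodule.range_subtype (restrictSupport K S), ← LinearMap.range_comp,
    LinearMap.finrank_range_of_inj hinj,
    Module.finrank_eq_nat_card_basis (basisRestrictSupport K S)]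
  rfl

end MonomialIdeal

section CountingSeries

variable {α β ι : Type*}

-- `Nat.card` of an infinite fibre is `0`: this counts correctly only when `w` has finite fibres.
noncomputable def countingSeries (w : α → ℕ) : PowerSeries ℚ :=
  PowerSeries.mk fun n => Nat.card {a // w a = n}

theorem coeff_countingSeries (w : α → ℕ) (n : ℕ) :
    PowerSeries.coeff n (countingSeries w) = Nat.card {a // w a = n} :=
  PowerSeries.coeff_mk _ _

theorem countingSeries_congr (e : α ≃ β) {w : α → ℕ} {w' : β → ℕ} (h : ∀ a, w' (e a) = w a) :
    countingSeries w = countingSeries w' := by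
  ext n
  simp only [coeff_countingSeries]
  exact congrArg _ (Nat.card_congr (e.subtypeEquiv fun a => by rw [h]))

theorem countingSeries_sumElim (w₁ : α → ℕ) (w₂ : β → ℕ) [∀ n, Finite {a // w₁ a = n}]
    [∀ n, Finite {b // w₂ b = n}] :
    countingSeries (Sum.elim w₁ w₂) = countingSeries w₁ + countingSeries w₂ := by
  ext n
  simp only [map_add, coeff_countingSeries, ← Nat.cast_add, ← Nat.card_sum]
  exact congrArg _ (Nat.card_congr Equiv.subtypeSum)

instance finite_sumElim_fiber (w₁ : α → ℕ) (w₂ : β → ℕ) [∀ n, Finite {a // w₁ a = n}]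
    [∀ n, Finite {b // w₂ b = n}] (n : ℕ) : Finite {x // Sum.elim w₁ w₂ x = n} :=
  Finite.of_equiv ({a // w₁ a = n} ⊕ {b // w₂ b = n})
    (Equiv.subtypeSum (p := fun x => Sum.elim w₁ w₂ x = n)).symm

variable [Fintype ι] [DecidableEq ι]

noncomputable def piFiberEquiv (w : α → ℕ) (d : ℕ) :
    {g : ι → α // ∑ i, w (g i) = d} ≃
      Σ l : Finset.finsuppAntidiag (Finset.univ : Finset ι) d,
        {g : ι → α // ∀ i, w (g i) = l.1 i} where
  toFun g := ⟨⟨Finsupp.equivFunOnFinite.symm fun i => w (g.1 i),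
    Finset.mem_finsuppAntidiag.2 ⟨g.2, Finset.subset_univ _⟩⟩, g.1, fun _ => rfl⟩
  invFun x := ⟨x.2.1, by
    simp_rw [x.2.2]
    exact (Finset.mem_finsuppAntidiag.1 x.1.2).1⟩
  left_inv _ := rfl
  right_inv x := Sigma.subtype_ext (Subtype.ext (Finsupp.ext fun i => x.2.2 i)) rfl

instance finite_forall_fiber (w : α → ℕ) [∀ n, Finite {a // w a = n}] (l : ι → ℕ) :
    Finite {g : ι → α // ∀ i, w (g i) = l i} :=
  Finite.of_equiv (∀ i, {a // w a = l i}) Equiv.subtypePiEquivPi.symm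

instance finite_sum_fiber (w : α → ℕ) [∀ n, Finite {a // w a = n}] (d : ℕ) :
    Finite {g : ι → α // ∑ i, w (g i) = d} :=
  Finite.of_equiv _ (piFiberEquiv w d).symm

theorem countingSeries_pi (w : α → ℕ) [∀ n, Finite {a // w a = n}] :
    countingSeries (fun g : ι → α => ∑ i, w (g i)) = countingSeries w ^ Fintype.card ι := by
  ext d
  rw [← Finset.card_univ, ← Finset.prod_const, PowerSeries.coeff_prod, coeff_countingSeries,
    Nat.card_congr (piFiberEquiv w d), Nat.card_sigma, Nat.cast_sum,
    ← Finset.sum_coe_sort (Finset.univ.finsuppAntidiag d)]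
  refine Finset.sum_congr rfl fun l _ => ?_
  rw [Nat.card_congr (Equiv.subtypePiEquivPi (p := fun i a => w a = l.1 i)), Nat.card_pi]
  push_cast
  simp only [coeff_countingSeries]

end CountingSeries

section GraphMonomial

variable {V : Type*}

theorem Finsupp.single_one_add_single_one_le_iff {v w : V} (hvw : v ≠ w) (m : V →₀ ℕ) :
    Finsupp.single v 1 + Finsupp.single w 1 ≤ m ↔ m v ≠ 0 ∧ m w ≠ 0 := by
  classical
  simp only [Finsupp.le_def, Finsupp.add_apply, Finsupp.single_apply]
  constructor
  · intro h
    have hv := h v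
    have hw := h w
    simp only [hvw, hvw.symm, if_true, if_false] at hv hw
    omega
  · rintro ⟨hv, hw⟩ u
    split_ifs <;> subst_vars <;> first | omega | exact (hvw rfl).elim

theorem SimpleGraph.isIndepSet_support_iff (G : SimpleGraph V) (m : V →₀ ℕ) :
    G.IsIndepSet ↑m.support ↔ ∀ v w, G.Adj v w → m v = 0 ∨ m w = 0 := by
  simp only [SimpleGraph.IsIndepSet, Set.Pairwise, Finset.mem_coe, Finsupp.mem_support_iff]
  exact ⟨fun h v w hvw => by by_contra! h'; exact h h'.1 h'.2 hvw.ne hvw,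
    fun h v hv w hw _ hvw => (h v w hvw).elim hv hw⟩

theorem forall_not_le_edge_iff_isIndepSet_support (G : SimpleGraph V) (m : V →₀ ℕ) :
    (∀ e ∈ {s | ∃ v w, G.Adj v w ∧ s = Finsupp.single v 1 + Finsupp.single w 1}, ¬ e ≤ m) ↔
      G.IsIndepSet ↑m.support := by
  rw [G.isIndepSet_support_iff]
  constructor
  · intro h v w hvw
    have := h _ ⟨v, w, hvw, rfl⟩
    rw [Finsupp.single_one_add_single_one_le_iff hvw.ne] at this
    tauto
  · rintro h _ ⟨v, w, hvw, rfl⟩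
    rw [Finsupp.single_one_add_single_one_le_iff hvw.ne]
    have := h v w hvw
    tauto

end GraphMonomial

section EdgeIdeal

variable {K V : Type} [Field K]

theorem edgeIdeal_eq_span_monomial (G : SimpleGraph V) :
    edgeIdeal K G = Ideal.span ((fun s => monomial s (1 : K)) ''
      {s | ∃ v w, G.Adj v w ∧ s = Finsupp.single v 1 + Finsupp.single w 1}) := by
  have hX : ∀ v w : V, (X v * X w : MvPolynomial V K) =
      monomial (Finsupp.single v 1 + Finsupp.single w 1) 1 := fun v w => by
    rw [X, X, monomial_mul, one_mul]
  simp only [edgeIdeal, hX]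
  congr 1
  ext p
  simp [eq_comm]

theorem hilbertSeries_edgeIdeal [Fintype V] (G : SimpleGraph V) :
    hilbertSeries K (edgeIdeal K G) =
      countingSeries fun m : {m : V →₀ ℕ // G.IsIndepSet ↑m.support} => m.1.degree := by
  ext d
  rw [hilbertSeries, PowerSeries.coeff_mk, coeff_countingSeries, edgeIdeal_eq_span_monomial,
    finrank_map_homogeneousSubmodule_span_monomial]
  refine congrArg _ (Nat.card_congr ?_)
  refine (Equiv.subtypeEquivRight fun m => ?_).trans
    (Equiv.subtypeSubtypeEquivSubtypeInter (fun m : V →₀ ℕ => G.IsIndepSet ↑m.support)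
      (fun m => m.degree = d)).symm
  rw [forall_not_le_edge_iff_isIndepSet_support, and_comm]

end EdgeIdeal

section StarTriangle

variable {t : ℕ}

def starVertex (t : ℕ) : Option (Fin t × Fin 2) ≃ Fin (2 * t + 1) :=
  (Equiv.optionCongr (finProdFinEquiv.trans (finCongr (mul_comm t 2)))).trans
    (finSuccEquiv (2 * t)).symm

@[simp] theorem starVertex_none : starVertex t none = 0 := rfl

@[simp] theorem val_starVertex_some (i : Fin t) (j : Fin 2) :
    (starVertex t (some (i, j)) : ℕ) = 2 * i + j + 1 := by
  simp [starVertex, finProdFinEquiv]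
  ring

theorem starTriangle_adj_starVertex (x y : Option (Fin t × Fin 2)) :
    (starTriangle t).Adj (starVertex t x) (starVertex t y) ↔
      x ≠ y ∧ (x = none ∨ y = none ∨ x.map Prod.fst = y.map Prod.fst) := by
  rw [starTriangle, SimpleGraph.fromRel_adj, (starVertex t).injective.ne_iff]
  refine and_congr_right fun _ => ?_
  rcases x with _ | ⟨i, j⟩ <;> rcases y with _ | ⟨k, l⟩
  · simp
  · simp
  · simp
  · have := l.isLt
    have := j.isLt
    simp only [Fin.ext_iff, val_starVertex_some, Fin.val_zero, Option.map_some,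
      Option.some_inj, reduceCtorEq, false_or]
    omega

noncomputable def starMonomialEquiv (t : ℕ) :
    (Fin (2 * t + 1) →₀ ℕ) ≃ ℕ × (Fin t → ℕ × ℕ) :=
  Finsupp.equivFunOnFinite.trans <| ((starVertex t).symm.arrowCongr (Equiv.refl ℕ)).trans <|
    Equiv.piOptionEquivProd.trans <| (Equiv.refl ℕ).prodCongr <|
      (Equiv.curry _ _ _).trans <| (Equiv.refl _).arrowCongr (piFinTwoEquiv fun _ => ℕ)

theorem starMonomialEquiv_apply (m : Fin (2 * t + 1) →₀ ℕ) :
    starMonomialEquiv t m =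
      (m 0, fun i => (m (starVertex t (some (i, 0))), m (starVertex t (some (i, 1))))) :=
  rfl

theorem degree_eq_starMonomialEquiv (m : Fin (2 * t + 1) →₀ ℕ) :
    m.degree = (starMonomialEquiv t m).1 +
      ∑ i, (((starMonomialEquiv t m).2 i).1 + ((starMonomialEquiv t m).2 i).2) := by
  rw [starMonomialEquiv_apply, Finsupp.degree_eq_sum, ← (starVertex t).sum_comp,
    Fintype.sum_option, Fintype.sum_prod_type]
  simp [Fin.sum_univ_two]

theorem isIndepSet_support_starTriangle_iff (m : Fin (2 * t + 1) →₀ ℕ) :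
    (starTriangle t).IsIndepSet ↑m.support ↔
      (m 0 = 0 ∨ ∀ p, m (starVertex t (some p)) = 0) ∧
        ∀ i, m (starVertex t (some (i, 0))) = 0 ∨ m (starVertex t (some (i, 1))) = 0 := by
  rw [SimpleGraph.isIndepSet_support_iff]
  constructor
  · intro h
    have h' x y (hxy : _) := h _ _ ((starTriangle_adj_starVertex x y).2 hxy)
    refine ⟨or_iff_not_imp_left.2 fun h0 p => (h' none (some p) (by simp)).resolve_left h0,
      fun i => h' (some (i, 0)) (some (i, 1)) (by simp)⟩
  · rintro ⟨h0, hpair⟩ v w hvw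
    obtain ⟨x, rfl⟩ := (starVertex t).surjective v
    obtain ⟨y, rfl⟩ := (starVertex t).surjective w
    rw [starTriangle_adj_starVertex] at hvw
    rcases x with _ | ⟨i, j⟩ <;> rcases y with _ | ⟨k, l⟩
    · simp at hvw
    · exact h0.imp id (· _)
    · exact (h0.imp id (· _)).symm
    · simp only [ne_eq, Option.some_inj, Prod.mk.injEq, reduceCtorEq, Option.map_some,
        false_or] at hvw
      obtain ⟨hne, rfl⟩ := hvw
      fin_cases j <;> fin_cases l <;> simp at hne ⊢
      exacts [hpair i, (hpair i).symm]

def pairDegree (p : {p : ℕ × ℕ // p.1 = 0 ∨ p.2 = 0}) : ℕ := p.1.1 + p.1.2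

theorem countingSeries_val_ne_zero :
    countingSeries (fun a : {a : ℕ // a ≠ 0} => a.1) = PowerSeries.X * PowerSeries.mk 1 := by
  ext n
  rw [coeff_countingSeries]
  rcases n with _ | n
  · have : IsEmpty {a : {a : ℕ // a ≠ 0} // a.1 = 0} := ⟨fun a => a.1.2 a.2⟩
    simp
  · rw [PowerSeries.coeff_succ_X_mul, PowerSeries.coeff_mk, Pi.one_apply, Nat.cast_eq_one,
      Nat.card_eq_one_iff_exists]
    exact ⟨⟨⟨n + 1, n.succ_ne_zero⟩, rfl⟩, fun a => Subtype.ext (Subtype.ext a.2)⟩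

instance finite_val_ne_zero_fiber (n : ℕ) : Finite {a : {a : ℕ // a ≠ 0} // a.1 = n} :=
  Finite.of_injective (fun _ => ()) fun a b _ => Subtype.ext (Subtype.ext (a.2.trans b.2.symm))

theorem card_pair_fiber (n : ℕ) : Nat.card {p // pairDegree p = n} = if n = 0 then 1 else 2 := by
  have hfiber : {p : ℕ × ℕ | (p.1 = 0 ∨ p.2 = 0) ∧ p.1 + p.2 = n} = {(n, 0), (0, n)} := by
    ext ⟨a, b⟩
    simp only [Set.mem_ofPred_eq, Set.mem_insert_iff, Set.mem_singleton_iff, Prod.mk.injEq]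
    omega
  unfold pairDegree
  rw [Nat.card_congr (Equiv.subtypeSubtypeEquivSubtypeInter
    (fun p : ℕ × ℕ => p.1 = 0 ∨ p.2 = 0) (fun p => p.1 + p.2 = n)), ← Set.coe_ofPred, hfiber,
    Nat.card_coe_set_eq]
  split_ifs with hn
  · simp [hn]
  · exact Set.ncard_pair (by simp [hn])

instance finite_pair_fiber (n : ℕ) : Finite {p // pairDegree p = n} :=
  Nat.finite_of_card_ne_zero (by rw [card_pair_fiber]; split_ifs <;> simp)

theorem countingSeries_pair :
    countingSeries pairDegree = (1 + PowerSeries.X) * PowerSeries.mk 1 := by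
  ext n
  rw [coeff_countingSeries, card_pair_fiber, add_mul, one_mul, map_add]
  rcases n with _ | n <;> simp [PowerSeries.coeff_succ_X_mul]
  norm_num

def coneEquiv (ι : Type*) :
    {x : ℕ × (ι → ℕ × ℕ) // (x.1 = 0 ∨ x.2 = 0) ∧ ∀ i, (x.2 i).1 = 0 ∨ (x.2 i).2 = 0} ≃
      {a : ℕ // a ≠ 0} ⊕ (ι → {p : ℕ × ℕ // p.1 = 0 ∨ p.2 = 0}) where
  toFun x := if h : x.1.1 = 0 then .inr fun i => ⟨x.1.2 i, x.2.2 i⟩ else .inl ⟨x.1.1, h⟩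
  invFun := Sum.elim (fun a => ⟨(a, 0), Or.inr rfl, fun _ => Or.inl rfl⟩)
    (fun g => ⟨(0, fun i => g i), Or.inl rfl, fun i => (g i).2⟩)
  left_inv := by
    rintro ⟨⟨a, g⟩, hag, hg⟩
    by_cases ha : a = 0
    · subst ha
      simp
    · obtain rfl := hag.resolve_left ha
      simp [ha]
  right_inv := by
    rintro (⟨a, ha⟩ | g) <;> simp [*]

theorem sumElim_coneEquiv {ι : Type*} [Fintype ι]
    (x : {x : ℕ × (ι → ℕ × ℕ) // (x.1 = 0 ∨ x.2 = 0) ∧ ∀ i, (x.2 i).1 = 0 ∨ (x.2 i).2 = 0}) :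
    Sum.elim Subtype.val (fun g => ∑ i, pairDegree (g i)) (coneEquiv ι x) =
      x.1.1 + ∑ i, ((x.1.2 i).1 + (x.1.2 i).2) := by
  obtain ⟨⟨a, g⟩, hag, hg⟩ := x
  by_cases ha : a = 0
  · simp [coneEquiv, ha, pairDegree]
  · obtain rfl := hag.resolve_left ha
    simp [coneEquiv, ha]

noncomputable def starIndepEquiv (t : ℕ) :
    {m : Fin (2 * t + 1) →₀ ℕ // (starTriangle t).IsIndepSet ↑m.support} ≃
      {a : ℕ // a ≠ 0} ⊕ (Fin t → {p : ℕ × ℕ // p.1 = 0 ∨ p.2 = 0}) :=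
  ((starMonomialEquiv t).subtypeEquiv fun m => by
    simp [isIndepSet_support_starTriangle_iff, starMonomialEquiv_apply, funext_iff,
      Fin.forall_fin_two]).trans (coneEquiv (Fin t))

theorem sumElim_starIndepEquiv
    (m : {m : Fin (2 * t + 1) →₀ ℕ // (starTriangle t).IsIndepSet ↑m.support}) :
    Sum.elim Subtype.val (fun g => ∑ i, pairDegree (g i)) (starIndepEquiv t m) = m.1.degree := by
  rw [starIndepEquiv, Equiv.trans_apply, sumElim_coneEquiv, degree_eq_starMonomialEquiv]
  rfl

theorem hilbertSeries_edgeIdeal_starTriangle (K : Type) [Field K] (t : ℕ) :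
    hilbertSeries K (edgeIdeal K (starTriangle t)) =
      PowerSeries.X * PowerSeries.mk 1 + ((1 + PowerSeries.X) * PowerSeries.mk 1) ^ t := by
  rw [hilbertSeries_edgeIdeal, countingSeries_congr (starIndepEquiv t)
    sumElim_starIndepEquiv, countingSeries_sumElim, countingSeries_pi,
    countingSeries_val_ne_zero, countingSeries_pair, Fintype.card_fin]

end StarTriangle

theorem add_pow_mul_one_sub_pow_of_mul_one_sub_eq_one {R : Type*} [CommRing R] {x g : R}
    (hg : g * (1 - x) = 1) (s : ℕ) :
    (x * g + ((1 + x) * g) ^ (s + 1)) * (1 - x) ^ (s + 1) =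
      (1 + x) ^ (s + 1) + x * (1 - x) ^ s := by
  have htriangles : ((1 + x) * g) ^ (s + 1) * (1 - x) ^ (s + 1) = (1 + x) ^ (s + 1) := by
    rw [← mul_pow, mul_assoc, hg, mul_one]
  rw [add_mul, htriangles, pow_succ]
  linear_combination x * (1 - x) ^ s * hg

/-- The Hilbert series of `S/I(G^△_t)` (star triangle with `t ≥ 1` triangles) equals
`((1+λ)^t + λ(1-λ)^(t-1)) / (1-λ)^t`. -/
theorem hilbertSeries_starTriangle (K : Type) [Field K] (t : ℕ) (ht : 1 ≤ t) :
    hilbertSeries K (edgeIdeal K (starTriangle t)) * (1 - PowerSeries.X) ^ t =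
      (1 + PowerSeries.X) ^ t + PowerSeries.X * (1 - PowerSeries.X) ^ (t - 1) := by
  obtain ⟨s, rfl⟩ := Nat.exists_eq_add_of_le' ht
  rw [hilbertSeries_edgeIdeal_starTriangle, Nat.add_sub_cancel]
  exact add_pow_mul_one_sub_pow_of_mul_one_sub_eq_one (PowerSeries.mk_one_mul_one_sub_eq_one ℚ) s
end

section
/- Let $G$ be a Cameron--Walker graph with bipartite part on $\{v_1,\ldots,v_m\} \cup \{w_1,\ldots,w_n\}$, where each $v_i$ has $s_i \geq 1$ leaf edges and each $w_j$ has $t_j \geq 0$ pendant triangles. Then $\dim K[V(G)]/I(G) = \sum_{i=1}^m s_i + \sum_{j=1}^n \max\{t_j, 1\}$. -/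
/-!
A prime `P ⊇ I(G)` contains `xᵥ` for every `v` outside the independent set
`A = {v | xᵥ ∉ P}`, so it contains the prime `(xᵥ : v ∉ A)`, whose quotient is `K[A]`; conversely
every independent set `A` gives the quotient `K[V]/I(G) ↠ K[A]`. Hence `dim K[V]/I(G) = α(G)`.
For a Cameron–Walker graph, the edges `vᵢx⁽ⁱ⁾ₖ`, the pendant triangles at `wⱼ` and the vertices `wⱼ`
with `tⱼ = 0` are `∑ sᵢ + ∑ max(tⱼ, 1)` cliques covering `V(G)` (each `vᵢ` is covered as `sᵢ ≥ 1`),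
and picking the leaves, one non-`wⱼ` vertex of each triangle and the `wⱼ` with `tⱼ = 0` is an
independent set meeting each of them.
-/

open MvPolynomial

/-- Vertices of a Cameron–Walker graph with standard labeling: the `vᵢ`, the `wⱼ`,
the leaves `x^(i)_k` (`1 ≤ k ≤ sᵢ`), and the pendant-triangle vertices
`y^(j)_{ℓ,1}, y^(j)_{ℓ,2}` (`1 ≤ ℓ ≤ tⱼ`). -/
abbrev CWVert (m n : ℕ) (s : Fin m → ℕ) (t : Fin n → ℕ) : Type :=
  Fin m ⊕ Fin n ⊕ (Σ i : Fin m, Fin (s i)) ⊕ (Σ j : Fin n, Fin (t j) × Fin 2)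

def cwRel (m n : ℕ) (s : Fin m → ℕ) (t : Fin n → ℕ) (B : Fin m → Fin n → Prop) :
    CWVert m n s t → CWVert m n s t → Prop
  | Sum.inl i, Sum.inr (Sum.inl j) => B i j
  | Sum.inl i, Sum.inr (Sum.inr (Sum.inl ⟨i', _⟩)) => i = i'
  | Sum.inr (Sum.inl j), Sum.inr (Sum.inr (Sum.inr ⟨j', _, _⟩)) => j = j'
  | Sum.inr (Sum.inr (Sum.inr ⟨j, ℓ, _⟩)), Sum.inr (Sum.inr (Sum.inr ⟨j', ℓ', _⟩)) =>
      j = j' ∧ (ℓ : ℕ) = (ℓ' : ℕ)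
  | _, _ => False

/-- The Cameron–Walker graph determined by the data `m, n, s, t, B`: a bipartite part
on `{v₁,…,v_m} ∪ {w₁,…,w_n}` with edges given by `B`, `s i` leaf edges attached to `vᵢ`,
and `t j` pendant triangles attached to `wⱼ`. -/
def cwGraph (m n : ℕ) (s : Fin m → ℕ) (t : Fin n → ℕ) (B : Fin m → Fin n → Prop) :
    SimpleGraph (CWVert m n s t) :=
  SimpleGraph.fromRel (cwRel m n s t B)

/-- The bipartite part of the Cameron–Walker graph. -/
def bipGraph (m n : ℕ) (B : Fin m → Fin n → Prop) : SimpleGraph (Fin m ⊕ Fin n) :=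
  SimpleGraph.fromRel fun a b =>
    match a, b with
    | Sum.inl i, Sum.inr j => B i j
    | _, _ => False

/-- An independent dominating set: an independent set `A` with `A ∪ N_G(A) = V(G)`. -/
def IsIndepDomSet {V : Type} (G : SimpleGraph V) (A : Finset V) : Prop :=
  (∀ a ∈ A, ∀ b ∈ A, ¬ G.Adj a b) ∧ (∀ v, v ∈ A ∨ ∃ a ∈ A, G.Adj a v)

/-- `i(G)`: the minimum cardinality of an independent dominating set of `G`. -/
noncomputable def indepDomNumber {V : Type} (G : SimpleGraph V) : ℕ :=
  sInf {k | ∃ A : Finset V, IsIndepDomSet G A ∧ A.card = k}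

/-- The independence number: the maximum cardinality of an independent set of `G`. -/
noncomputable def indepNumber {V : Type} [Fintype V] (G : SimpleGraph V) : ℕ :=
  sSup {k | ∃ A : Finset V, (∀ a ∈ A, ∀ b ∈ A, ¬ G.Adj a b) ∧ A.card = k}

/-- The matching number: the maximum cardinality of a matching of `G`. -/
noncomputable def matchingNumber {V : Type} [Fintype V] (G : SimpleGraph V) : ℕ :=
  sSup {k | ∃ M : Finset (Sym2 V), (∀ e ∈ M, e ∈ G.edgeSet) ∧
    (∀ e ∈ M, ∀ e' ∈ M, e ≠ e' → ∀ v, v ∈ e → v ∉ e') ∧ M.card = k}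

namespace MvPolynomial

variable {R σ : Type*} [CommRing R]

theorem sub_rename_killCompl_mem_span_X_image_compl (s : Set σ) (p : MvPolynomial σ R) :
    p - rename Subtype.val (killCompl (R := R) (Subtype.val_injective (p := (· ∈ s))) p) ∈
      Ideal.span (X '' sᶜ) := by
  induction p using MvPolynomial.induction_on' with
  | monomial u a =>
    by_cases h : ↑u.support ⊆ Set.range (Subtype.val : s → σ)
    · rw [killCompl_monomial_eq_monomial_comapDomain_of_subset _ _ h, rename_monomial,
        Finsupp.mapDomain_comapDomain _ Subtype.val_injective _ h, sub_self]
      exact zero_mem _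
    · rw [killCompl_monomial_eq_zero_of_not_subset _ _ h, map_zero, sub_zero,
        mem_ideal_span_X_image]
      intro u' hu'
      obtain ⟨i, hiu, his⟩ := Set.not_subset.mp h
      rw [Finset.mem_coe, Finsupp.mem_support_iff] at hiu
      refine ⟨i, fun hi => his ⟨⟨i, hi⟩, rfl⟩, ?_⟩
      rwa [Finset.mem_singleton.mp (support_monomial_subset hu')]
  | add p q hp hq =>
    rw [map_add, map_add, add_sub_add_comm]
    exact add_mem hp hq

theorem ker_killCompl_subtype (s : Set σ) :
    RingHom.ker (killCompl (R := R) (Subtype.val_injective (p := (· ∈ s)))) =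
      Ideal.span (X '' sᶜ) := by
  refine le_antisymm (fun p hp => ?_) (Ideal.span_le.mpr ?_)
  · simpa [RingHom.mem_ker.mp hp] using sub_rename_killCompl_mem_span_X_image_compl s p
  · rintro _ ⟨i, hi, rfl⟩
    rw [SetLike.mem_coe, RingHom.mem_ker, X,
      killCompl_monomial_eq_zero_of_notMem_range _ _ (a := i)]
    · simp
    · simpa using hi

theorem ringKrullDim_quotient_span_X_image_compl (s : Set σ) :
    ringKrullDim (MvPolynomial σ R ⧸ Ideal.span (X '' sᶜ : Set (MvPolynomial σ R))) =
      ringKrullDim (MvPolynomial s R) := by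
  rw [← ker_killCompl_subtype]
  exact ringKrullDim_eq_of_ringEquiv
    (RingHom.quotientKerEquivOfRightInverse (killCompl_rename_app Subtype.val_injective))

theorem ringKrullDim_quotient_span_X_image_compl_eq_card (K : Type*) [Field K] [Finite σ]
    (s : Set σ) :
    ringKrullDim (MvPolynomial σ K ⧸ Ideal.span (X '' sᶜ : Set (MvPolynomial σ K))) =
      Nat.card s := by
  rw [ringKrullDim_quotient_span_X_image_compl]
  simp

end MvPolynomial

theorem ringKrullDim_quotient_le_of_forall_isPrime {R : Type*} [CommRing R] {I : Ideal R}
    {d : WithBot ℕ∞} (h : ∀ P : Ideal R, P.IsPrime → I ≤ P → ∃ J ≤ P, ringKrullDim (R ⧸ J) ≤ d) :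
    ringKrullDim (R ⧸ I) ≤ d := by
  rw [ringKrullDim_quotient, Order.krullDim]
  refine iSup_le fun l => ?_
  obtain ⟨J, hJP, hJ⟩ := h _ (l 0).1.isPrime (l 0).2
  let l' : LTSeries (PrimeSpectrum.zeroLocus (R := R) J) :=
    { length := l.length
      toFun := fun i => ⟨l i, hJP.trans ((l.monotone (Fin.zero_le i)) : (l 0).1 ≤ (l i).1)⟩
      step := l.step }
  rw [ringKrullDim_quotient] at hJ
  exact (Order.LTSeries.length_le_krullDim l').trans hJ

namespace SimpleGraph

variable {V ι : Type*} [Fintype ι] {G : SimpleGraph V}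

theorem indepNum_le_card_of_isClique_preimage [Finite V] (f : V → ι)
    (hf : ∀ i, G.IsClique (f ⁻¹' {i})) : G.indepNum ≤ Fintype.card ι := by
  obtain ⟨A, hA⟩ := G.exists_isNIndepSet_indepNum
  rw [← hA.card_eq, ← Finset.card_univ]
  refine Finset.card_le_card_of_injOn f (fun _ _ => Finset.mem_coe.mpr (Finset.mem_univ _)) ?_
  intro v hv w hw hvw
  by_contra hne
  exact hA.isIndepSet hv hw hne (hf (f w) hvw rfl hne)

theorem IsIndepSet.natCard_le_indepNum [Finite V] {A : Set V} (hA : G.IsIndepSet A) :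
    Nat.card A ≤ G.indepNum := by
  have := Fintype.ofFinite V
  classical
  rw [Nat.card_eq_card_toFinset]
  exact IsIndepSet.card_le_indepNum (by simpa using hA)

theorem card_le_indepNum_of_injective [Finite V] {g : ι → V} (hg : Function.Injective g)
    (hind : G.IsIndepSet (Set.range g)) : Fintype.card ι ≤ G.indepNum := by
  classical
  rw [← Finset.card_univ, ← Finset.card_image_of_injective _ hg]
  exact IsIndepSet.card_le_indepNum (by simpa using hind)

end SimpleGraph

section EdgeIdeal

variable (K : Type) [Field K] {V : Type} (G : SimpleGraph V)

theorem edgeIdeal_le_span_X_image_compl {A : Set V} (hA : G.IsIndepSet A) :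
    edgeIdeal K G ≤ Ideal.span (X '' Aᶜ) := by
  refine Ideal.span_le.mpr ?_
  rintro _ ⟨v, w, hvw, rfl⟩
  by_cases hv : v ∈ A
  · have hw : w ∉ A := fun hw => hA hv hw hvw.ne hvw
    exact Ideal.mul_mem_left _ _ (Ideal.subset_span ⟨w, hw, rfl⟩)
  · exact Ideal.mul_mem_right _ _ (Ideal.subset_span ⟨v, hv, rfl⟩)

theorem isIndepSet_setOf_X_notMem {P : Ideal (MvPolynomial V K)} [P.IsPrime]
    (hP : edgeIdeal K G ≤ P) : G.IsIndepSet {v | X v ∉ P} := by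
  intro v hv w hw _ hvw
  rcases Ideal.IsPrime.mem_or_mem ‹_› (hP (Ideal.subset_span ⟨v, w, hvw, rfl⟩)) with h | h
  exacts [hv h, hw h]

theorem ringKrullDim_quotient_edgeIdeal [Finite V] :
    ringKrullDim (MvPolynomial V K ⧸ edgeIdeal K G) = G.indepNum := by
  refine le_antisymm (ringKrullDim_quotient_le_of_forall_isPrime fun P hP hIP => ?_) ?_
  · have hA := isIndepSet_setOf_X_notMem K G hIP
    refine ⟨Ideal.span (X '' {v | X v ∉ P}ᶜ), Ideal.span_le.mpr ?_, ?_⟩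
    · rintro _ ⟨v, hv, rfl⟩
      simpa using hv
    · rw [ringKrullDim_quotient_span_X_image_compl_eq_card]
      exact_mod_cast hA.natCard_le_indepNum
  · obtain ⟨A, hA⟩ := G.exists_isNIndepSet_indepNum
    have := ringKrullDim_le_of_surjective _
      (Ideal.Quotient.factor_surjective (edgeIdeal_le_span_X_image_compl K G hA.isIndepSet))
    rw [ringKrullDim_quotient_span_X_image_compl_eq_card] at this
    simpa [hA.card_eq] using this

end EdgeIdeal

section CameronWalker

variable {m n : ℕ} {s : Fin m → ℕ} {t : Fin n → ℕ}

/-- Indexes a clique cover of the Cameron–Walker graph: `⟨i, k⟩` is the edge `vᵢx⁽ⁱ⁾ₖ`, and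
`⟨j, ℓ⟩` is the `ℓ`-th pendant triangle at `wⱼ`, or `{wⱼ}` when `tⱼ = 0`. -/
abbrev CWSlot (m n : ℕ) (s : Fin m → ℕ) (t : Fin n → ℕ) : Type :=
  (Σ i : Fin m, Fin (s i)) ⊕ (Σ j : Fin n, Fin (max (t j) 1))

theorem card_cwSlot : Fintype.card (CWSlot m n s t) = ∑ i, s i + ∑ j, max (t j) 1 := by
  simp [Fintype.card_sigma]

def cwCliqueIndex (hs : ∀ i, 1 ≤ s i) : CWVert m n s t → CWSlot m n s t
  | .inl i => .inl ⟨i, ⟨0, hs i⟩⟩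
  | .inr (.inl j) => .inr ⟨j, ⟨0, lt_max_of_lt_right zero_lt_one⟩⟩
  | .inr (.inr (.inl p)) => .inl p
  | .inr (.inr (.inr ⟨j, ℓ, _⟩)) => .inr ⟨j, ⟨ℓ, lt_max_of_lt_left ℓ.2⟩⟩

def cwIndepVertex : CWSlot m n s t → CWVert m n s t
  | .inl p => .inr (.inr (.inl p))
  | .inr ⟨j, ℓ⟩ => if h : (ℓ : ℕ) < t j then .inr (.inr (.inr ⟨j, ⟨ℓ, h⟩, 0⟩)) else .inr (.inl j)

theorem cwCliqueIndex_cwIndepVertex (hs : ∀ i, 1 ≤ s i) (x : CWSlot m n s t) :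
    cwCliqueIndex hs (cwIndepVertex x) = x := by
  rcases x with p | ⟨j, ℓ⟩
  · rfl
  · by_cases h : (ℓ : ℕ) < t j
    · simp [cwIndepVertex, cwCliqueIndex, h]
    · simp [cwIndepVertex, cwCliqueIndex, h]
      omega

theorem cwGraph_isClique_preimage_cwCliqueIndex (B : Fin m → Fin n → Prop) (hs : ∀ i, 1 ≤ s i)
    (x : CWSlot m n s t) : (cwGraph m n s t B).IsClique (cwCliqueIndex hs ⁻¹' {x}) := by
  intro v hv w hw hne
  simp only [Set.mem_preimage, Set.mem_singleton_iff] at hv hw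
  rw [← hw] at hv
  rw [cwGraph, SimpleGraph.fromRel_adj]
  refine ⟨hne, ?_⟩
  rcases v with i | j | ⟨i, k⟩ | ⟨j, ℓ, a⟩ <;> rcases w with i' | j' | ⟨i', k'⟩ | ⟨j', ℓ', a'⟩ <;>
    simp [cwCliqueIndex, cwRel] at hv hne ⊢
  all_goals obtain ⟨rfl, h⟩ := hv
  all_goals simp [Fin.ext_iff] at h hne ⊢
  all_goals omega

theorem cwGraph_isIndepSet_range_cwIndepVertex (B : Fin m → Fin n → Prop) :
    (cwGraph m n s t B).IsIndepSet (Set.range cwIndepVertex) := by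
  rintro _ ⟨x, rfl⟩ _ ⟨y, rfl⟩ hne
  rw [cwGraph, SimpleGraph.fromRel_adj]
  rcases x with ⟨i, k⟩ | ⟨j, ℓ⟩ <;> rcases y with ⟨i', k'⟩ | ⟨j', ℓ'⟩ <;>
    simp only [cwIndepVertex] at hne ⊢ <;> (try split_ifs at hne ⊢) <;> simp_all [cwRel]
  -- left: two chosen triangle vertices; right: a chosen `wⱼ` (so `tⱼ = 0`) and a triangle at `wⱼ`
  · constructor <;> rintro rfl h <;> exact hne rfl (by simp [h])
  · rintro rfl
    have := ℓ'.2
    omega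
  · rintro rfl
    have := ℓ.2
    omega

theorem indepNum_cwGraph (B : Fin m → Fin n → Prop) (hs : ∀ i, 1 ≤ s i) :
    (cwGraph m n s t B).indepNum = ∑ i, s i + ∑ j, max (t j) 1 := by
  rw [← card_cwSlot]
  refine le_antisymm (SimpleGraph.indepNum_le_card_of_isClique_preimage (cwCliqueIndex hs)
    (cwGraph_isClique_preimage_cwCliqueIndex B hs)) ?_
  exact SimpleGraph.card_le_indepNum_of_injective
    (Function.LeftInverse.injective (cwCliqueIndex_cwIndepVertex hs))
    (cwGraph_isIndepSet_range_cwIndepVertex B)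

end CameronWalker

theorem cwGraph_dim_general (K : Type) [Field K] (m n : ℕ) (s : Fin m → ℕ) (t : Fin n → ℕ)
    (B : Fin m → Fin n → Prop) (hs : ∀ i, 1 ≤ s i) :
    ringKrullDim (MvPolynomial (CWVert m n s t) K ⧸ edgeIdeal K (cwGraph m n s t B)) =
      ((∑ i, s i + ∑ j, max (t j) 1 : ℕ) : ℕ) := by
  rw [ringKrullDim_quotient_edgeIdeal, indepNum_cwGraph B hs]

/-- For a Cameron–Walker graph `G` (bipartite part on `{v₁,…,v_m} ∪ {w₁,…,w_n}`, with
`sᵢ ≥ 1` leaf edges at each `vᵢ` and `tⱼ ≥ 0` pendant triangles at each `wⱼ`),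
`dim K[V(G)]/I(G) = ∑ sᵢ + ∑ max{tⱼ, 1}`. -/
theorem cwGraph_dim (K : Type) [Field K] (m n : ℕ) (s : Fin m → ℕ) (t : Fin n → ℕ)
    (B : Fin m → Fin n → Prop) (hm : 1 ≤ m) (hn : 1 ≤ n) (hs : ∀ i, 1 ≤ s i)
    (hconn : (bipGraph m n B).Connected) :
    ringKrullDim (MvPolynomial (CWVert m n s t) K ⧸ edgeIdeal K (cwGraph m n s t B)) =
      ((∑ i, s i + ∑ j, max (t j) 1 : ℕ) : ℕ) :=
  cwGraph_dim_general K m n s t B hs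
end

section
/- Let $G$ be a Cameron--Walker graph with standard labeling (bipartite part $\{v_1,\ldots,v_m\}\cup\{w_1,\ldots,w_n\}$, $s_i \geq 1$ leaves at each $v_i$, $t_j \geq 0$ pendant triangles at each $w_j$), and let $i(G)$ be the minimum cardinality of an independent set $A \subseteq V(G)$ with $A \cup N_G(A) = V(G)$. Then $m + |\{j : t_j > 0\}| \leq i(G) \leq \min\{\sum_{i=1}^m s_i + n, \; \sum_{j=1}^n t_j + m\}$. -/
/-!
Every leaf and every pendant-triangle vertex has all its neighbours in its own zone: the zone of
`vᵢ` consists of `vᵢ` and its leaves, that of `wⱼ` of `wⱼ` and its triangles. A dominating set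
therefore meets each of the `m` zones of the `vᵢ` and each zone of a `wⱼ` with `tⱼ > 0`, which
gives the lower bound. For the upper bound, the leaves together with all `wⱼ`, and the `vᵢ`
together with one vertex of each pendant triangle, are independent dominating sets; in the latter
each `wⱼ` is dominated because connectivity of the bipartite part gives it a neighbour `vᵢ`.
-/

theorem indepDomNumber_le {V : Type} {G : SimpleGraph V} {A : Finset V}
    (hA : IsIndepDomSet G A) : indepDomNumber G ≤ A.card :=
  Nat.sInf_le ⟨A, hA, rfl⟩

theorem le_indepDomNumber {V : Type} {G : SimpleGraph V} {k : ℕ} (hG : ∃ A, IsIndepDomSet G A)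
    (h : ∀ A, IsIndepDomSet G A → k ≤ A.card) : k ≤ indepDomNumber G := by
  obtain ⟨A, hA⟩ := hG
  refine le_csInf ⟨A.card, A, hA, rfl⟩ ?_
  rintro _ ⟨A, hA, rfl⟩
  exact h A hA

theorem exists_rel_of_bipGraph_connected {m n : ℕ} {B : Fin m → Fin n → Prop} (hm : 1 ≤ m)
    (hconn : (bipGraph m n B).Connected) (j : Fin n) : ∃ i, B i j := by
  have : Nontrivial (Fin m ⊕ Fin n) := ⟨⟨Sum.inl ⟨0, hm⟩, Sum.inr j, Sum.inl_ne_inr⟩⟩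
  obtain ⟨u, hu⟩ := hconn.preconnected.exists_adj_of_nontrivial (Sum.inr j)
  rcases u with i | j' <;> simp [bipGraph] at hu
  exact ⟨i, hu⟩

namespace CameronWalker

variable {m n : ℕ} {s : Fin m → ℕ} {t : Fin n → ℕ} {B : Fin m → Fin n → Prop}

theorem adj_of_rel {a b : CWVert m n s t} (hne : a ≠ b) (h : cwRel m n s t B a b) :
    (cwGraph m n s t B).Adj a b :=
  (SimpleGraph.fromRel_adj _ a b).2 ⟨hne, Or.inl h⟩

def zone : CWVert m n s t → Fin m ⊕ Fin n
  | Sum.inl i => Sum.inl i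
  | Sum.inr (Sum.inl j) => Sum.inr j
  | Sum.inr (Sum.inr (Sum.inl x)) => Sum.inl x.1
  | Sum.inr (Sum.inr (Sum.inr y)) => Sum.inr y.1

theorem zone_eq_of_adj {a : CWVert m n s t} {p} (h : (cwGraph m n s t B).Adj a (.inr (.inr p))) :
    zone a = zone (.inr (.inr p)) := by
  rcases a with i | j | ⟨i, k⟩ | ⟨j, ℓ, c⟩ <;> rcases p with ⟨i', k'⟩ | ⟨j', ℓ', c'⟩ <;>
    simp [cwGraph, cwRel, zone] at h ⊢ <;> grind

theorem exists_mem_zone_eq {A : Finset (CWVert m n s t)}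
    (hA : ∀ v, v ∈ A ∨ ∃ a ∈ A, (cwGraph m n s t B).Adj a v) (p) :
    ∃ a ∈ A, zone a = zone (.inr (.inr p) : CWVert m n s t) := by
  rcases hA (.inr (.inr p)) with hp | ⟨a, ha, hadj⟩
  · exact ⟨_, hp, rfl⟩
  · exact ⟨a, ha, zone_eq_of_adj hadj⟩

theorem add_card_filter_le_card_of_dominating (hs : ∀ i, 1 ≤ s i) {A : Finset (CWVert m n s t)}
    (hA : ∀ v, v ∈ A ∨ ∃ a ∈ A, (cwGraph m n s t B).Adj a v) :
    m + (Finset.univ.filter fun j => 0 < t j).card ≤ A.card := by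
  let T : Finset (Fin m ⊕ Fin n) := Finset.univ.disjSum (Finset.univ.filter fun j => 0 < t j)
  have hsurj : Set.SurjOn zone (A : Set (CWVert m n s t)) T := by
    rintro (i | j) hz
    · exact exists_mem_zone_eq hA (.inl ⟨i, ⟨0, hs i⟩⟩)
    · have hj : 0 < t j := by simpa [T] using hz
      exact exists_mem_zone_eq hA (.inr ⟨j, ⟨0, hj⟩, 0⟩)
  simpa [T] using Finset.card_le_card_of_surjOn zone hsurj

def leavesAndW (m n : ℕ) (s : Fin m → ℕ) (t : Fin n → ℕ) : Finset (CWVert m n s t) :=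
  (∅ : Finset (Fin m)).disjSum (Finset.univ.disjSum (Finset.univ.disjSum ∅))

def vAndTriangleTips (m n : ℕ) (s : Fin m → ℕ) (t : Fin n → ℕ) : Finset (CWVert m n s t) :=
  Finset.univ.disjSum ((∅ : Finset (Fin n)).disjSum ((∅ : Finset (Σ i, Fin (s i))).disjSum
    (Finset.univ.sigma fun _ => Finset.univ ×ˢ {0})))

theorem card_leavesAndW : (leavesAndW m n s t).card = (∑ i, s i) + n := by
  simp [leavesAndW, add_comm]

theorem card_vAndTriangleTips : (vAndTriangleTips m n s t).card = (∑ j, t j) + m := by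
  simp [vAndTriangleTips, add_comm]

theorem isIndepDomSet_leavesAndW (hs : ∀ i, 1 ≤ s i) :
    IsIndepDomSet (cwGraph m n s t B) (leavesAndW m n s t) := by
  refine ⟨?_, ?_⟩
  · rintro (i | j | ⟨i, k⟩ | ⟨j, ℓ, c⟩) ha (i' | j' | ⟨i', k'⟩ | ⟨j', ℓ', c'⟩) hb <;>
      simp only [leavesAndW, Finset.inl_mem_disjSum, Finset.inr_mem_disjSum] at ha hb <;>
      simp_all [cwGraph, cwRel]
  · rintro (i | j | ⟨i, k⟩ | ⟨j, ℓ, c⟩)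
    · exact .inr ⟨.inr (.inr (.inl ⟨i, ⟨0, hs i⟩⟩)), by simp [leavesAndW],
        SimpleGraph.Adj.symm (adj_of_rel (by simp) rfl)⟩
    · exact .inl (by simp [leavesAndW])
    · exact .inl (by simp [leavesAndW])
    · exact .inr ⟨.inr (.inl j), by simp [leavesAndW], adj_of_rel (by simp) rfl⟩

theorem isIndepDomSet_vAndTriangleTips (hm : 1 ≤ m) (hconn : (bipGraph m n B).Connected) :
    IsIndepDomSet (cwGraph m n s t B) (vAndTriangleTips m n s t) := by
  refine ⟨?_, ?_⟩
  · rintro (i | j | ⟨i, k⟩ | ⟨j, ℓ, c⟩) ha (i' | j' | ⟨i', k'⟩ | ⟨j', ℓ', c'⟩) hb <;>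
      simp only [vAndTriangleTips, Finset.inl_mem_disjSum, Finset.inr_mem_disjSum] at ha hb <;>
      simp_all [cwGraph, cwRel]
    refine fun hne => ⟨?_, ?_⟩ <;> rintro rfl hℓ <;> simp [Fin.ext hℓ] at hne
  · rintro (i | j | ⟨i, k⟩ | ⟨j, ℓ, c⟩)
    · exact .inl (by simp [vAndTriangleTips])
    · obtain ⟨i, hij⟩ := exists_rel_of_bipGraph_connected hm hconn j
      exact .inr ⟨.inl i, by simp [vAndTriangleTips], adj_of_rel (by simp) hij⟩
    · exact .inr ⟨.inl i, by simp [vAndTriangleTips], adj_of_rel (by simp) rfl⟩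
    · fin_cases c
      · exact .inl (by simp [vAndTriangleTips])
      · exact .inr ⟨.inr (.inr (.inr ⟨j, ℓ, 0⟩)), by simp [vAndTriangleTips],
          adj_of_rel (by simp) ⟨rfl, rfl⟩⟩

end CameronWalker

theorem cwGraph_indepDomNumber_bounds_general (m n : ℕ) (s : Fin m → ℕ) (t : Fin n → ℕ)
    (B : Fin m → Fin n → Prop) (hm : 1 ≤ m) (hs : ∀ i, 1 ≤ s i)
    (hconn : (bipGraph m n B).Connected) :
    m + (Finset.univ.filter fun j => 0 < t j).card ≤ indepDomNumber (cwGraph m n s t B) ∧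
    indepDomNumber (cwGraph m n s t B) ≤ min ((∑ i, s i) + n) ((∑ j, t j) + m) := by
  have hA₁ := CameronWalker.isIndepDomSet_leavesAndW (t := t) (B := B) hs
  have hA₂ := CameronWalker.isIndepDomSet_vAndTriangleTips (s := s) (t := t) hm hconn
  refine ⟨le_indepDomNumber ⟨_, hA₁⟩ fun _ hA => ?_, le_min ?_ ?_⟩
  · exact CameronWalker.add_card_filter_le_card_of_dominating hs hA.2
  · exact (indepDomNumber_le hA₁).trans_eq CameronWalker.card_leavesAndW
  · exact (indepDomNumber_le hA₂).trans_eq CameronWalker.card_vAndTriangleTips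

/-- For a Cameron–Walker graph `G` with standard labeling,
`m + |{j : tⱼ > 0}| ≤ i(G) ≤ min{∑ sᵢ + n, ∑ tⱼ + m}`. -/
theorem cwGraph_indepDomNumber_bounds (m n : ℕ) (s : Fin m → ℕ) (t : Fin n → ℕ)
    (B : Fin m → Fin n → Prop) (hm : 1 ≤ m) (hn : 1 ≤ n) (hs : ∀ i, 1 ≤ s i)
    (hconn : (bipGraph m n B).Connected) :
    m + (Finset.univ.filter fun j => 0 < t j).card ≤ indepDomNumber (cwGraph m n s t B) ∧
    indepDomNumber (cwGraph m n s t B) ≤ min ((∑ i, s i) + n) ((∑ j, t j) + m) :=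
  cwGraph_indepDomNumber_bounds_general m n s t B hm hs hconn
end

section
/- Let $G$ be a Cameron--Walker graph with standard labeling whose bipartite part is the complete bipartite graph $K_{m,n}$. Then $i(G) = \min\{\sum_{i=1}^m s_i + n, \; \sum_{j=1}^n t_j + m\}$, where $i(G)$ is the minimum cardinality of an independent dominating set of $G$. -/
section CWAux

open Classical in
/-- Counting via disjoint zones: if every zone is hit by `A`, then `|Z| ≤ |A|`. -/
theorem cw_zone_card_le {V Z : Type} [Fintype Z] (A : Finset V)
    (zone : V → Option Z) (h : ∀ z : Z, ∃ a ∈ A, zone a = some z) :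
    Fintype.card Z ≤ A.card := by
  classical
  choose f hfA hfz using h
  have h2 : (Finset.univ : Finset Z).card ≤ A.card := by
    apply Finset.card_le_card_of_injOn f (fun z _ => hfA z)
    intro a _ b _ hab
    have h1 := hfz a
    rw [hab, hfz b] at h1
    exact (Option.some_injective _ h1).symm
  simpa using h2

def cwZone1 (m n : ℕ) (s : Fin m → ℕ) (t : Fin n → ℕ) :
    CWVert m n s t → Option (Fin m ⊕ (Σ j : Fin n, Fin (t j)))
  | Sum.inl i => some (Sum.inl i)
  | Sum.inr (Sum.inl _) => none
  | Sum.inr (Sum.inr (Sum.inl ⟨i, _⟩)) => some (Sum.inl i)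
  | Sum.inr (Sum.inr (Sum.inr ⟨j, ℓ, _⟩)) => some (Sum.inr ⟨j, ℓ⟩)

def cwZone2 (m n : ℕ) (s : Fin m → ℕ) (t : Fin n → ℕ) :
    CWVert m n s t → Option ((Σ i : Fin m, Fin (s i)) ⊕ Fin n)
  | Sum.inl _ => none
  | Sum.inr (Sum.inl j) => some (Sum.inr j)
  | Sum.inr (Sum.inr (Sum.inl p)) => some (Sum.inl p)
  | Sum.inr (Sum.inr (Sum.inr ⟨j, _, _⟩)) => some (Sum.inr j)

def cwF1 (m n : ℕ) (s : Fin m → ℕ) (t : Fin n → ℕ) :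
    Fin n ⊕ (Σ i : Fin m, Fin (s i)) → CWVert m n s t
  | Sum.inl j => Sum.inr (Sum.inl j)
  | Sum.inr p => Sum.inr (Sum.inr (Sum.inl p))

def cwF2 (m n : ℕ) (s : Fin m → ℕ) (t : Fin n → ℕ) :
    Fin m ⊕ (Σ j : Fin n, Fin (t j)) → CWVert m n s t
  | Sum.inl i => Sum.inl i
  | Sum.inr ⟨j, ℓ⟩ => Sum.inr (Sum.inr (Sum.inr ⟨j, ℓ, 0⟩))

theorem cwF1_inj (m n : ℕ) (s : Fin m → ℕ) (t : Fin n → ℕ) :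
    Function.Injective (cwF1 m n s t) := by
  intro a b h
  cases a <;> cases b <;> simp_all [cwF1]

theorem cwF2_inj (m n : ℕ) (s : Fin m → ℕ) (t : Fin n → ℕ) :
    Function.Injective (cwF2 m n s t) := by
  rintro (a | ⟨j, ℓ⟩) (b | ⟨j', ℓ'⟩) h <;> simp_all [cwF2]
  obtain ⟨rfl, h2⟩ := h
  simp_all

end CWAux

section CWAux2

theorem cwA1_indepDom (m n : ℕ) (s : Fin m → ℕ) (t : Fin n → ℕ) (hn : 1 ≤ n) :
    IsIndepDomSet (cwGraph m n s t (fun _ _ => True))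
      (Finset.univ.image (cwF1 m n s t)) := by
  classical
  have hmemw : ∀ j : Fin n, (Sum.inr (Sum.inl j) : CWVert m n s t) ∈
      Finset.univ.image (cwF1 m n s t) :=
    fun j => Finset.mem_image.mpr ⟨Sum.inl j, Finset.mem_univ _, rfl⟩
  have hmemx : ∀ p : Σ i : Fin m, Fin (s i),
      (Sum.inr (Sum.inr (Sum.inl p)) : CWVert m n s t) ∈
      Finset.univ.image (cwF1 m n s t) :=
    fun p => Finset.mem_image.mpr ⟨Sum.inr p, Finset.mem_univ _, rfl⟩
  constructor
  · intro a ha b hb hadj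
    simp only [Finset.mem_image, Finset.mem_univ, true_and] at ha hb
    obtain ⟨z1, rfl⟩ := ha
    obtain ⟨z2, rfl⟩ := hb
    rw [cwGraph, SimpleGraph.fromRel_adj] at hadj
    rcases z1 with j | ⟨i, k⟩ <;> rcases z2 with j' | ⟨i', k'⟩ <;>
      simp_all [cwF1, cwRel]
  · rintro (i | j | p | ⟨j, ℓ, e⟩)
    · refine Or.inr ⟨Sum.inr (Sum.inl ⟨0, hn⟩), hmemw _, ?_⟩
      rw [cwGraph, SimpleGraph.fromRel_adj]
      exact ⟨by simp, Or.inr trivial⟩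
    · exact Or.inl (hmemw j)
    · exact Or.inl (hmemx p)
    · refine Or.inr ⟨Sum.inr (Sum.inl j), hmemw _, ?_⟩
      rw [cwGraph, SimpleGraph.fromRel_adj]
      exact ⟨by simp, Or.inl rfl⟩

theorem cwA2_indepDom (m n : ℕ) (s : Fin m → ℕ) (t : Fin n → ℕ) (hm : 1 ≤ m) :
    IsIndepDomSet (cwGraph m n s t (fun _ _ => True))
      (Finset.univ.image (cwF2 m n s t)) := by
  classical
  have hmemv : ∀ i : Fin m, (Sum.inl i : CWVert m n s t) ∈
      Finset.univ.image (cwF2 m n s t) :=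
    fun i => Finset.mem_image.mpr ⟨Sum.inl i, Finset.mem_univ _, rfl⟩
  have hmemy : ∀ (j : Fin n) (ℓ : Fin (t j)),
      (Sum.inr (Sum.inr (Sum.inr ⟨j, ℓ, 0⟩)) : CWVert m n s t) ∈
      Finset.univ.image (cwF2 m n s t) :=
    fun j ℓ => Finset.mem_image.mpr ⟨Sum.inr ⟨j, ℓ⟩, Finset.mem_univ _, rfl⟩
  constructor
  · intro a ha b hb hadj
    simp only [Finset.mem_image, Finset.mem_univ, true_and] at ha hb
    obtain ⟨z1, rfl⟩ := ha
    obtain ⟨z2, rfl⟩ := hb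
    rw [cwGraph, SimpleGraph.fromRel_adj] at hadj
    rcases z1 with i | ⟨j, ℓ⟩ <;> rcases z2 with i' | ⟨j', ℓ'⟩ <;>
      simp_all [cwF2, cwRel]
    · obtain ⟨h1, h2⟩ := hadj
      rcases h2 with ⟨rfl, h3⟩ | ⟨rfl, h3⟩ <;>
        · have hl : ℓ = ℓ' := Fin.ext (by omega)
          subst hl
          exact h1 rfl HEq.rfl
  · rintro (i | j | ⟨i, k⟩ | ⟨j, ℓ, e⟩)
    · exact Or.inl (hmemv i)
    · refine Or.inr ⟨Sum.inl ⟨0, hm⟩, hmemv _, ?_⟩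
      rw [cwGraph, SimpleGraph.fromRel_adj]
      exact ⟨by simp, Or.inl trivial⟩
    · refine Or.inr ⟨Sum.inl i, hmemv _, ?_⟩
      rw [cwGraph, SimpleGraph.fromRel_adj]
      exact ⟨by simp, Or.inl rfl⟩
    · fin_cases e
      · exact Or.inl (hmemy j ℓ)
      · refine Or.inr ⟨Sum.inr (Sum.inr (Sum.inr ⟨j, ℓ, 0⟩)), hmemy _ _, ?_⟩
        rw [cwGraph, SimpleGraph.fromRel_adj]
        exact ⟨by simp, Or.inl ⟨rfl, rfl⟩⟩

end CWAux2

section CWAux3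

theorem cw_lower (m n : ℕ) (s : Fin m → ℕ) (t : Fin n → ℕ)
    (A : Finset (CWVert m n s t))
    (hA : IsIndepDomSet (cwGraph m n s t (fun _ _ => True)) A) :
    min ((∑ i, s i) + n) ((∑ j, t j) + m) ≤ A.card := by
  obtain ⟨hind, hdom⟩ := hA
  by_cases hv : ∃ i : Fin m, (Sum.inl i : CWVert m n s t) ∈ A
  · obtain ⟨i0, hi0⟩ := hv
    have hw : ∀ j : Fin n, (Sum.inr (Sum.inl j) : CWVert m n s t) ∉ A := by
      intro j hj
      refine hind _ hi0 _ hj ?_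
      rw [cwGraph, SimpleGraph.fromRel_adj]
      exact ⟨by simp, Or.inl trivial⟩
    have hz : ∀ z : Fin m ⊕ (Σ j : Fin n, Fin (t j)),
        ∃ a ∈ A, cwZone1 m n s t a = some z := by
      rintro (i | ⟨j, ℓ⟩)
      · rcases hdom (Sum.inl i) with h | ⟨a, ha, hadj⟩
        · exact ⟨_, h, rfl⟩
        · rw [cwGraph, SimpleGraph.fromRel_adj] at hadj
          obtain ⟨hne, hrel⟩ := hadj
          rcases a with i' | j' | ⟨i', k⟩ | ⟨j', ℓ', e'⟩
          · simp [cwRel] at hrel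
          · exact absurd ha (hw j')
          · have : i = i' := by simpa [cwRel] using hrel
            subst this
            exact ⟨_, ha, rfl⟩
          · simp [cwRel] at hrel
      · rcases hdom (Sum.inr (Sum.inr (Sum.inr ⟨j, ℓ, 0⟩))) with h | ⟨a, ha, hadj⟩
        · exact ⟨_, h, rfl⟩
        · rw [cwGraph, SimpleGraph.fromRel_adj] at hadj
          obtain ⟨hne, hrel⟩ := hadj
          rcases a with i' | j' | ⟨i', k⟩ | ⟨j', ℓ', e'⟩
          · simp [cwRel] at hrel
          · have : j' = j := by simpa [cwRel] using hrel
            subst this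
            exact absurd ha (hw j')
          · simp [cwRel] at hrel
          · simp only [cwRel] at hrel
            have hj : j' = j ∧ (ℓ' : ℕ) = (ℓ : ℕ) := by
              rcases hrel with ⟨rfl, h2⟩ | ⟨rfl, h2⟩ <;> exact ⟨rfl, by omega⟩
            obtain ⟨rfl, h2⟩ := hj
            have : ℓ' = ℓ := Fin.ext h2
            subst this
            exact ⟨_, ha, rfl⟩
    have hcard := cw_zone_card_le A (cwZone1 m n s t) hz
    simp only [Fintype.card_sum, Fintype.card_sigma, Fintype.card_fin] at hcard
    exact le_trans (min_le_right _ _) (by omega)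
  · push_neg at hv
    have hz : ∀ z : (Σ i : Fin m, Fin (s i)) ⊕ Fin n,
        ∃ a ∈ A, cwZone2 m n s t a = some z := by
      rintro (⟨i, k⟩ | j)
      · rcases hdom (Sum.inr (Sum.inr (Sum.inl ⟨i, k⟩))) with h | ⟨a, ha, hadj⟩
        · exact ⟨_, h, rfl⟩
        · rw [cwGraph, SimpleGraph.fromRel_adj] at hadj
          obtain ⟨hne, hrel⟩ := hadj
          rcases a with i' | j' | ⟨i', k'⟩ | ⟨j', ℓ', e'⟩
          · exact absurd ha (hv i')
          · simp [cwRel] at hrel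
          · simp [cwRel] at hrel
          · simp [cwRel] at hrel
      · rcases hdom (Sum.inr (Sum.inl j)) with h | ⟨a, ha, hadj⟩
        · exact ⟨_, h, rfl⟩
        · rw [cwGraph, SimpleGraph.fromRel_adj] at hadj
          obtain ⟨hne, hrel⟩ := hadj
          rcases a with i' | j' | ⟨i', k'⟩ | ⟨j', ℓ', e'⟩
          · exact absurd ha (hv i')
          · simp [cwRel] at hrel
          · simp [cwRel] at hrel
          · have : j = j' := by simpa [cwRel] using hrel
            subst this
            exact ⟨_, ha, rfl⟩
    have hcard := cw_zone_card_le A (cwZone2 m n s t) hz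
    simp only [Fintype.card_sum, Fintype.card_sigma, Fintype.card_fin] at hcard
    exact le_trans (min_le_left _ _) (by omega)

end CWAux3

/-- For a Cameron–Walker graph whose bipartite part is the complete bipartite graph
`K_{m,n}`, one has `i(G) = min{∑ sᵢ + n, ∑ tⱼ + m}`. -/
theorem cwGraph_complete_bipartite_indepDomNumber (m n : ℕ) (s : Fin m → ℕ)
    (t : Fin n → ℕ) (hm : 1 ≤ m) (hn : 1 ≤ n) (hs : ∀ i, 1 ≤ s i) :
    indepDomNumber (cwGraph m n s t (fun _ _ => True)) =
      min ((∑ i, s i) + n) ((∑ j, t j) + m) := by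
  classical
  have h1 := cwA1_indepDom m n s t hn
  have h2 := cwA2_indepDom m n s t hm
  have c1 : (Finset.univ.image (cwF1 m n s t)).card = (∑ i, s i) + n := by
    rw [Finset.card_image_of_injective _ (cwF1_inj m n s t), Finset.card_univ]
    simp [Fintype.card_sum, Fintype.card_sigma, add_comm]
  have c2 : (Finset.univ.image (cwF2 m n s t)).card = (∑ j, t j) + m := by
    rw [Finset.card_image_of_injective _ (cwF2_inj m n s t), Finset.card_univ]
    simp [Fintype.card_sum, Fintype.card_sigma, add_comm]
  unfold indepDomNumber
  apply le_antisymm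
  · exact le_min (Nat.sInf_le ⟨_, h1, c1⟩) (Nat.sInf_le ⟨_, h2, c2⟩)
  · have hne : {k | ∃ A : Finset (CWVert m n s t),
        IsIndepDomSet (cwGraph m n s t (fun _ _ => True)) A ∧ A.card = k}.Nonempty :=
      ⟨_, _, h1, c1⟩
    obtain ⟨A, hA, hcard⟩ := Nat.sInf_mem hne
    rw [← hcard]
    exact cw_lower m n s t A hA
end

section
/- Let $G$ be a Cameron--Walker graph with standard labeling and bipartite part $G_{\mathrm{bip}}$. The equality $i(G) = \sum_{j=1}^n t_j + m$ holds (equivalently, $\operatorname{depth} = \operatorname{reg}$ for $S/I(G)$) if and only if for every subset $V \subseteq \{v_1,\ldots,v_m\}$ one has $\sum_{v_i \in V} s_i + |\{j : N_{G_{\mathrm{bip}}}(w_j) \subseteq V\}| \geq \sum_{j : N_{G_{\mathrm{bip}}}(w_j) \subseteq V} t_j + |V|$. -/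
/-!
For `Vs ⊆ {v₁,…,v_m}` let `D(Vs)` (`indepDomSetOf`) consist of the `vᵢ ∉ Vs`, the `wⱼ` with
`N(wⱼ) ⊆ Vs`, all leaves at the `vᵢ ∈ Vs`, and one vertex of every triangle at the other `wⱼ`.
It is an independent dominating set, and `|D(Vs)| ≥ ∑ tⱼ + m` is exactly the inequality for `Vs`;
since every `wⱼ` has a neighbour, `|D(∅)| = ∑ tⱼ + m`. Conversely, if `A` is any independent
dominating set and `Vs` is the set of `vᵢ ∉ A`, then each vertex of `A` dominates at most one
vertex of `D(Vs)`, so `|A| ≥ |D(Vs)|`. Thus `i(G) = min_Vs |D(Vs)|`, and the theorem follows.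
-/
open Finset

theorem card_le_of_dominating {V : Type} {G : SimpleGraph V} {A S : Finset V}
    (hA : ∀ v, v ∈ A ∨ ∃ a ∈ A, G.Adj a v)
    (hS : ∀ a ∈ A, ∀ x ∈ S, ∀ y ∈ S, (a = x ∨ G.Adj a x) → (a = y ∨ G.Adj a y) → x = y) :
    #S ≤ #A := by
  have hdom : ∀ v, ∃ a ∈ A, a = v ∨ G.Adj a v := fun v =>
    (hA v).elim (fun hv => ⟨v, hv, .inl rfl⟩) fun ⟨a, ha, hav⟩ => ⟨a, ha, .inr hav⟩
  choose f hfA hf using hdom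
  exact card_le_card_of_injOn f (fun x _ => hfA x) fun x hx y hy hxy =>
    hS _ (hfA x) x hx y hy (hf x) (hxy ▸ hf y)

theorem indepDomNumber_le_card {V : Type} {G : SimpleGraph V} {A : Finset V}
    (hA : IsIndepDomSet G A) : indepDomNumber G ≤ #A :=
  Nat.sInf_le ⟨A, hA, rfl⟩

theorem exists_isIndepDomSet_card_eq_indepDomNumber {V : Type} {G : SimpleGraph V}
    {A : Finset V} (hA : IsIndepDomSet G A) :
    ∃ A', IsIndepDomSet G A' ∧ #A' = indepDomNumber G :=
  Nat.sInf_mem (s := {k | ∃ A, IsIndepDomSet G A ∧ #A = k}) ⟨#A, A, hA, rfl⟩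

namespace CameronWalker

variable {m n : ℕ} {s : Fin m → ℕ} {t : Fin n → ℕ} {B : Fin m → Fin n → Prop}

theorem cwGraph_adj {a b : CWVert m n s t} :
    (cwGraph m n s t B).Adj a b ↔ a ≠ b ∧ (cwRel m n s t B a b ∨ cwRel m n s t B b a) :=
  SimpleGraph.fromRel_adj _ _ _

theorem exists_adj_of_connected (hm : 1 ≤ m) (hconn : (bipGraph m n B).Connected) (j : Fin n) :
    ∃ i, B i j := by
  obtain ⟨w⟩ := hconn.preconnected (Sum.inr j) (Sum.inl ⟨0, hm⟩)
  cases w with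
  | @cons _ x _ hadj _ =>
    rcases x with i | j'
    · exact ⟨i, by simpa [bipGraph] using hadj⟩
    · simp [bipGraph] at hadj

theorem triangle_eq_of_adj {j j' : Fin n} {ℓ : Fin (t j)} {ℓ' : Fin (t j')} {c c' : Fin 2}
    (h : (cwGraph m n s t B).Adj (.inr (.inr (.inr ⟨j, ℓ, c⟩)))
      (.inr (.inr (.inr ⟨j', ℓ', c'⟩)))) :
    (⟨j, ℓ⟩ : Σ j, Fin (t j)) = ⟨j', ℓ'⟩ := by
  obtain ⟨-, ⟨rfl, hℓ⟩ | ⟨rfl, hℓ⟩⟩ := cwGraph_adj.1 h <;> simp [Fin.ext hℓ]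

variable [∀ i j, Decidable (B i j)]

variable (B) in
def coveredW (Vs : Finset (Fin m)) : Finset (Fin n) :=
  univ.filter fun j => ∀ i, B i j → i ∈ Vs

theorem mem_coveredW {Vs : Finset (Fin m)} {j : Fin n} :
    j ∈ coveredW B Vs ↔ ∀ i, B i j → i ∈ Vs := by simp [coveredW]

theorem coveredW_empty (hB : ∀ j, ∃ i, B i j) : coveredW B ∅ = ∅ := by
  ext j
  simpa [mem_coveredW] using hB j

variable (s t B) in
def indepDomSetOf (Vs : Finset (Fin m)) : Finset (CWVert m n s t) :=
  (univ \ Vs).disjSum ((coveredW B Vs).disjSum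
    ((Vs.sigma fun _ => univ).disjSum ((univ \ coveredW B Vs).sigma fun _ => univ ×ˢ {0})))

section mem
variable {Vs : Finset (Fin m)}

@[simp] theorem inl_mem_indepDomSetOf {i : Fin m} :
    Sum.inl i ∈ indepDomSetOf s t B Vs ↔ i ∉ Vs := by simp [indepDomSetOf]

@[simp] theorem inr_inl_mem_indepDomSetOf {j : Fin n} :
    Sum.inr (Sum.inl j) ∈ indepDomSetOf s t B Vs ↔ j ∈ coveredW B Vs := by
  simp [indepDomSetOf]

@[simp] theorem leaf_mem_indepDomSetOf {p : Σ i, Fin (s i)} :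
    Sum.inr (Sum.inr (Sum.inl p)) ∈ indepDomSetOf s t B Vs ↔ p.1 ∈ Vs := by
  simp [indepDomSetOf]

@[simp] theorem triangle_mem_indepDomSetOf {q : Σ j, Fin (t j) × Fin 2} :
    Sum.inr (Sum.inr (Sum.inr q)) ∈ indepDomSetOf s t B Vs ↔
      q.1 ∉ coveredW B Vs ∧ q.2.2 = 0 := by
  obtain ⟨j, ℓ, c⟩ := q
  simp [indepDomSetOf, eq_comm (a := (0 : Fin 2))]

end mem

theorem card_indepDomSetOf_add (Vs : Finset (Fin m)) :
    #(indepDomSetOf s t B Vs) + ((∑ j ∈ coveredW B Vs, t j) + #Vs) =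
      ((∑ j, t j) + m) + ((∑ i ∈ Vs, s i) + #(coveredW B Vs)) := by
  have hv := card_sdiff_add_card_eq_card (subset_univ Vs)
  have ht := sum_sdiff (f := t) (subset_univ (coveredW B Vs))
  simp only [card_univ, Fintype.card_fin] at hv
  simp only [indepDomSetOf, card_disjSum, card_sigma, card_univ, Fintype.card_fin,
    card_product, card_singleton, mul_one]
  omega

theorem card_indepDomSetOf_empty (hB : ∀ j, ∃ i, B i j) :
    #(indepDomSetOf s t B ∅) = (∑ j, t j) + m := by
  have := card_indepDomSetOf_add (s := s) (t := t) (B := B) ∅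
  rw [coveredW_empty hB, sum_empty, card_empty, sum_empty, card_empty] at this
  omega

theorem isIndepDomSet_indepDomSetOf (hs : ∀ i, 1 ≤ s i) (Vs : Finset (Fin m)) :
    IsIndepDomSet (cwGraph m n s t B) (indepDomSetOf s t B Vs) := by
  have hcov : ∀ i j, B i j → j ∈ coveredW B Vs → i ∈ Vs := fun i j hij hj =>
    mem_coveredW.1 hj i hij
  refine ⟨fun a ha b hb hab => ?_, fun v => ?_⟩
  · rcases a with i | j | ⟨i, k⟩ | ⟨j, ℓ, c⟩ <;>
      rcases b with i' | j' | ⟨i', k'⟩ | ⟨j', ℓ', c'⟩ <;> first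
      | (obtain ⟨⟩ := triangle_eq_of_adj hab; simp_all)
      | (simp only [cwGraph_adj, cwRel] at hab
         simp only [inl_mem_indepDomSetOf, inr_inl_mem_indepDomSetOf, leaf_mem_indepDomSetOf,
           triangle_mem_indepDomSetOf] at ha hb
         grind)
  · rcases v with i | j | ⟨i, k⟩ | ⟨j, ℓ, c⟩
    · by_cases hi : i ∈ Vs
      · exact .inr ⟨.inr (.inr (.inl ⟨i, ⟨0, hs i⟩⟩)), by simpa,
          cwGraph_adj.2 ⟨by simp, .inr rfl⟩⟩
      · exact .inl (by simpa)
    · by_cases hj : j ∈ coveredW B Vs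
      · exact .inl (by simpa)
      · obtain ⟨i, hij, hi⟩ : ∃ i, B i j ∧ i ∉ Vs := by simpa [mem_coveredW] using hj
        exact .inr ⟨.inl i, by simpa, cwGraph_adj.2 ⟨by simp, .inl hij⟩⟩
    · by_cases hi : i ∈ Vs
      · exact .inl (by simpa)
      · exact .inr ⟨.inl i, by simpa, cwGraph_adj.2 ⟨by simp, .inl rfl⟩⟩
    · by_cases hj : j ∈ coveredW B Vs
      · exact .inr ⟨.inr (.inl j), by simpa, cwGraph_adj.2 ⟨by simp, .inl rfl⟩⟩
      · by_cases hc : c = 0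
        · exact .inl (by simp [hj, hc])
        · exact .inr ⟨.inr (.inr (.inr ⟨j, ℓ, 0⟩)), by simpa,
            cwGraph_adj.2 ⟨by simp [Ne.symm hc], .inl ⟨rfl, rfl⟩⟩⟩

def outsideV (A : Finset (CWVert m n s t)) : Finset (Fin m) :=
  univ.filter fun i => Sum.inl i ∉ A

@[simp] theorem mem_outsideV {A : Finset (CWVert m n s t)} {i : Fin m} :
    i ∈ outsideV A ↔ Sum.inl i ∉ A := by simp [outsideV]

theorem mem_coveredW_outsideV {A : Finset (CWVert m n s t)}
    (hA : IsIndepDomSet (cwGraph m n s t B) A) {j : Fin n} (hj : Sum.inr (Sum.inl j) ∈ A) :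
    j ∈ coveredW B (outsideV A) := by
  simp only [mem_coveredW, mem_outsideV]
  exact fun i hij hi => hA.1 _ hi _ hj (cwGraph_adj.2 ⟨by simp, .inl hij⟩)

variable (B) in
/-- For `a ∈ A`, the only vertex of `indepDomSetOf s t B (outsideV A)` that `a` dominates. -/
def dominatedVertex (A : Finset (CWVert m n s t)) : CWVert m n s t → CWVert m n s t
  | .inl i => .inl i
  | .inr (.inl j) => .inr (.inl j)
  | .inr (.inr (.inl ⟨i, k⟩)) => if .inl i ∈ A then .inl i else .inr (.inr (.inl ⟨i, k⟩))
  | .inr (.inr (.inr ⟨j, ℓ, _⟩)) =>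
      if j ∈ coveredW B (outsideV A) then .inr (.inl j) else .inr (.inr (.inr ⟨j, ℓ, 0⟩))

theorem eq_dominatedVertex {A : Finset (CWVert m n s t)}
    (hA : IsIndepDomSet (cwGraph m n s t B) A) {a x : CWVert m n s t} (ha : a ∈ A)
    (hx : x ∈ indepDomSetOf s t B (outsideV A)) (hax : a = x ∨ (cwGraph m n s t B).Adj a x) :
    x = dominatedVertex B A a := by
  have hw : ∀ j, Sum.inr (Sum.inl j) ∈ A → j ∈ coveredW B (outsideV A) :=
    fun j => mem_coveredW_outsideV hA
  have hcov : ∀ i j, B i j → j ∈ coveredW B (outsideV A) → Sum.inl i ∉ A :=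
    fun i j hij hj => by simpa using mem_coveredW.1 hj i hij
  rcases hax with rfl | hax
  · rcases a with i | j | ⟨i, k⟩ | ⟨j, ℓ, c⟩ <;> simp_all [dominatedVertex]
  · rcases a with i | j | ⟨i, k⟩ | ⟨j, ℓ, c⟩ <;>
      rcases x with i' | j' | ⟨i', k'⟩ | ⟨j', ℓ', c'⟩ <;> first
      | (obtain ⟨⟩ := triangle_eq_of_adj hax; simp_all [dominatedVertex])
      | (simp only [cwGraph_adj, cwRel] at hax
         simp only [inl_mem_indepDomSetOf, inr_inl_mem_indepDomSetOf, leaf_mem_indepDomSetOf,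
           triangle_mem_indepDomSetOf, mem_outsideV, not_not] at hx
         grind [dominatedVertex])

theorem card_indepDomSetOf_outsideV_le {A : Finset (CWVert m n s t)}
    (hA : IsIndepDomSet (cwGraph m n s t B) A) :
    #(indepDomSetOf s t B (outsideV A)) ≤ #A :=
  card_le_of_dominating hA.2 fun _ ha _ hx _ hy hax hay =>
    (eq_dominatedVertex hA ha hx hax).trans (eq_dominatedVertex hA ha hy hay).symm

end CameronWalker

open CameronWalker

theorem cwGraph_depth_eq_reg_iff_general (m n : ℕ) (s : Fin m → ℕ) (t : Fin n → ℕ)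
    (B : Fin m → Fin n → Prop) [∀ i j, Decidable (B i j)]
    (hm : 1 ≤ m) (hs : ∀ i, 1 ≤ s i)
    (hconn : (bipGraph m n B).Connected) :
    indepDomNumber (cwGraph m n s t B) = (∑ j, t j) + m ↔
      ∀ Vs : Finset (Fin m),
        (∑ j ∈ Finset.univ.filter fun j => ∀ i, B i j → i ∈ Vs, t j) + Vs.card ≤
          (∑ i ∈ Vs, s i) +
            (Finset.univ.filter fun j => ∀ i, B i j → i ∈ Vs).card := by
  change _ ↔ ∀ Vs,
    (∑ j ∈ coveredW B Vs, t j) + #Vs ≤ (∑ i ∈ Vs, s i) + #(coveredW B Vs)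
  have hD := isIndepDomSet_indepDomSetOf (t := t) (B := B) hs
  have hcard := card_indepDomSetOf_add (s := s) (t := t) (B := B)
  constructor
  · intro h Vs
    have hle := indepDomNumber_le_card (hD Vs)
    have hsize := hcard Vs
    omega
  · intro hall
    apply le_antisymm
    · exact (indepDomNumber_le_card (hD ∅)).trans_eq
        (card_indepDomSetOf_empty (exists_adj_of_connected hm hconn))
    · obtain ⟨A, hA, hAcard⟩ := exists_isIndepDomSet_card_eq_indepDomNumber (hD ∅)
      have hle := card_indepDomSetOf_outsideV_le hA
      have hsize := hcard (outsideV A)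
      have hineq := hall (outsideV A)
      omega

/-- For a Cameron–Walker graph `G` with standard labeling, `i(G) = ∑ tⱼ + m`
(equivalently `depth S/I(G) = reg S/I(G)`) if and only if for every subset
`V ⊆ {v₁,…,v_m}` one has
`∑_{vᵢ ∈ V} sᵢ + |{j : N_bip(wⱼ) ⊆ V}| ≥ ∑_{j : N_bip(wⱼ) ⊆ V} tⱼ + |V|`. -/
theorem cwGraph_depth_eq_reg_iff (m n : ℕ) (s : Fin m → ℕ) (t : Fin n → ℕ)
    (B : Fin m → Fin n → Prop) [∀ i j, Decidable (B i j)]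
    (hm : 1 ≤ m) (hn : 1 ≤ n) (hs : ∀ i, 1 ≤ s i)
    (hconn : (bipGraph m n B).Connected) :
    indepDomNumber (cwGraph m n s t B) = (∑ j, t j) + m ↔
      ∀ Vs : Finset (Fin m),
        (∑ j ∈ Finset.univ.filter fun j => ∀ i, B i j → i ∈ Vs, t j) + Vs.card ≤
          (∑ i ∈ Vs, s i) +
            (Finset.univ.filter fun j => ∀ i, B i j → i ∈ Vs).card :=
  cwGraph_depth_eq_reg_iff_general m n s t B hm hs hconn
end

section
/- Let $G$ be a Cameron--Walker graph with standard labeling such that $t_j \leq 1$ for all $1 \leq j \leq n$. Then $i(G) = \sum_{j=1}^n t_j + m$, i.e. the minimum size of an independent dominating set of $G$ equals the matching number of $G$. -/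
/-!
Both numbers are counted by the blocks of `G`: the `m` vertices `vᵢ` and the `∑ tⱼ` pendant
triangles. All `vᵢ` together with one vertex of each triangle form an independent dominating set
(each `wⱼ` has a neighbour `vᵢ` because the bipartite part is connected), and the edges
`vᵢ x⁽ⁱ⁾₁` together with one edge of each triangle form a matching.

Every edge of `G` either contains some `vᵢ` or lies in a triangle `wⱼ y y'`, and a matching has at
most one edge through `vᵢ` and at most one edge inside a triangle. A dominating set meets the closed
neighbourhood of a leaf at each `vᵢ` and of a vertex of each triangle. These neighbourhoods hang
from `vᵢ`, resp. `wⱼ`, so they are pairwise disjoint as long as each `wⱼ` carries at most one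
triangle.
-/

open Finset

section GraphBounds

variable {V ι : Type*} {G : SimpleGraph V}

theorem card_le_card_of_dominating [Fintype ι] {A : Finset V}
    (hA : ∀ p, p ∈ A ∨ ∃ a ∈ A, G.Adj a p) (u : ι → V)
    (hu : ∀ a c c', (a = u c ∨ G.Adj a (u c)) → (a = u c' ∨ G.Adj a (u c')) → c = c') :
    Fintype.card ι ≤ #A := by
  have hdom : ∀ c, ∃ a ∈ A, a = u c ∨ G.Adj a (u c) := fun c => by
    rcases hA (u c) with h | ⟨a, ha, hadj⟩
    exacts [⟨_, h, Or.inl rfl⟩, ⟨a, ha, Or.inr hadj⟩]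
  choose f hfA hf using hdom
  rw [← card_univ]
  exact card_le_card_of_injOn f (fun c _ => hfA c) fun c _ c' _ h => hu _ c c' (hf c) (h ▸ hf c')

theorem exists_mem_mem_of_mem_triangle {a b c : V} {e e' : Sym2 V}
    (he : e ∈ ({s(a, b), s(a, c), s(b, c)} : Set (Sym2 V)))
    (he' : e' ∈ ({s(a, b), s(a, c), s(b, c)} : Set (Sym2 V))) : ∃ p ∈ e, p ∈ e' := by
  simp only [Set.mem_insert_iff, Set.mem_singleton_iff] at he he'
  rcases he with rfl | rfl | rfl <;> rcases he' with rfl | rfl | rfl <;> simp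

end GraphBounds

section GraphInvariants

variable {V : Type} {ι : Type*} {G : SimpleGraph V}

def IsEdgeMatching (G : SimpleGraph V) (M : Finset (Sym2 V)) : Prop :=
  (∀ e ∈ M, e ∈ G.edgeSet) ∧ (∀ e ∈ M, ∀ e' ∈ M, e ≠ e' → ∀ p, p ∈ e → p ∉ e')

theorem IsEdgeMatching.card_le [Fintype ι] {M : Finset (Sym2 V)} (hM : IsEdgeMatching G M)
    (S : ι → Set (Sym2 V)) (hcover : ∀ e ∈ G.edgeSet, ∃ c, e ∈ S c)
    (hS : ∀ c, ∀ e ∈ S c, ∀ e' ∈ S c, ∃ p ∈ e, p ∈ e') : #M ≤ Fintype.card ι := by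
  choose g hg using fun e : M => hcover e (hM.1 e e.2)
  have hinj : Function.Injective g := fun e e' h => Subtype.ext <| by
    by_contra hne
    obtain ⟨p, hp, hp'⟩ := hS _ _ (hg e) _ (h ▸ hg e')
    exact hM.2 e e.2 e' e'.2 hne p hp hp'
  simpa using Fintype.card_le_of_injective g hinj

theorem isEdgeMatching_image [Fintype ι] [DecidableEq V] (f : ι → Sym2 V)
    (hf : ∀ c, f c ∈ G.edgeSet) (hdisj : ∀ c c' p, p ∈ f c → p ∈ f c' → c = c') :
    IsEdgeMatching G (univ.image f) := by
  refine ⟨by simpa using hf, ?_⟩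
  simp only [mem_image, mem_univ, true_and]
  rintro _ ⟨c, rfl⟩ _ ⟨c', rfl⟩ hne p hp hp'
  exact hne (congrArg f (hdisj c c' p hp hp'))

theorem card_image_of_disjoint_edges [Fintype ι] [DecidableEq V] (f : ι → Sym2 V)
    (hdisj : ∀ c c' p, p ∈ f c → p ∈ f c' → c = c') : #(univ.image f) = Fintype.card ι :=
  card_image_of_injective _ fun c c' h =>
    hdisj c c' _ (Sym2.out_fst_mem (f c)) (h ▸ Sym2.out_fst_mem (f c))

theorem indepDomNumber_eq {A : Finset V} {k : ℕ} (hA : IsIndepDomSet G A) (hk : #A = k)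
    (hle : ∀ A, IsIndepDomSet G A → k ≤ #A) : indepDomNumber G = k :=
  le_antisymm (Nat.sInf_le ⟨A, hA, hk⟩) <|
    le_csInf ⟨k, A, hA, hk⟩ fun _ ⟨A', hA', hk'⟩ => hk' ▸ hle A' hA'

theorem matchingNumber_eq [Fintype V] {M : Finset (Sym2 V)} {k : ℕ} (hM : IsEdgeMatching G M)
    (hk : #M = k) (hle : ∀ M, IsEdgeMatching G M → #M ≤ k) : matchingNumber G = k := by
  have hbdd : ∀ k' ∈ {k | ∃ M : Finset (Sym2 V), (∀ e ∈ M, e ∈ G.edgeSet) ∧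
      (∀ e ∈ M, ∀ e' ∈ M, e ≠ e' → ∀ p, p ∈ e → p ∉ e') ∧ M.card = k}, k' ≤ k := by
    rintro _ ⟨M', h1, h2, rfl⟩
    exact hle M' ⟨h1, h2⟩
  exact le_antisymm (csSup_le ⟨k, M, hM.1, hM.2, hk⟩ hbdd) (le_csSup ⟨k, hbdd⟩ ⟨M, hM.1, hM.2, hk⟩)

end GraphInvariants

namespace CWVert

variable {m n : ℕ} {s : Fin m → ℕ} {t : Fin n → ℕ} {B : Fin m → Fin n → Prop}

abbrev v (i : Fin m) : CWVert m n s t := Sum.inl i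
abbrev w (j : Fin n) : CWVert m n s t := Sum.inr (Sum.inl j)
abbrev x (i : Fin m) (k : Fin (s i)) : CWVert m n s t := Sum.inr (Sum.inr (Sum.inl ⟨i, k⟩))
abbrev y (j : Fin n) (ℓ : Fin (t j)) (b : Fin 2) : CWVert m n s t :=
  Sum.inr (Sum.inr (Sum.inr ⟨j, ℓ, b⟩))

/-- One block per `vᵢ` and one per pendant triangle; each block carries one edge of a maximum
matching and one vertex of a minimum independent dominating set. -/
abbrev Block (m n : ℕ) (t : Fin n → ℕ) : Type := Fin m ⊕ Σ j : Fin n, Fin (t j)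

theorem card_block : Fintype.card (Block m n t) = ∑ j, t j + m := by
  simp [add_comm]

def anchor : CWVert m n s t → Fin m ⊕ Fin n
  | Sum.inl i => Sum.inl i
  | Sum.inr (Sum.inl j) => Sum.inr j
  | Sum.inr (Sum.inr (Sum.inl ⟨i, _⟩)) => Sum.inl i
  | Sum.inr (Sum.inr (Sum.inr ⟨j, _, _⟩)) => Sum.inr j

theorem anchor_eq_of_adj_pendant {a : CWVert m n s t}
    {p : (Σ i, Fin (s i)) ⊕ (Σ j, Fin (t j) × Fin 2)}
    (h : (cwGraph m n s t B).Adj a (Sum.inr (Sum.inr p))) :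
    anchor a = anchor (Sum.inr (Sum.inr p) : CWVert m n s t) := by
  rcases h with ⟨-, h | h⟩ <;>
    rcases a with i | j | ⟨i, k⟩ | ⟨j, ℓ, b⟩ <;> rcases p with ⟨i', k'⟩ | ⟨j', ℓ', b'⟩ <;>
    simp_all [cwRel, anchor]

theorem exists_adj_of_connected (hm : 1 ≤ m) (hconn : (bipGraph m n B).Connected) (j : Fin n) :
    ∃ i, B i j := by
  have := nontrivial_of_ne (Sum.inl ⟨0, hm⟩ : Fin m ⊕ Fin n) (Sum.inr j) Sum.inl_ne_inr
  obtain ⟨i | j', h⟩ := hconn.preconnected.exists_adj_of_nontrivial (Sum.inr j)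
  · exact ⟨i, by simpa [bipGraph] using h⟩
  · simp [bipGraph] at h

def pendantRep (hs : ∀ i, 1 ≤ s i) (c : Block m n t) : CWVert m n s t :=
  Sum.inr (Sum.inr (c.map (fun i => ⟨i, ⟨0, hs i⟩⟩) fun p => ⟨p.1, p.2, 0⟩))

theorem anchor_pendantRep_injective (hs : ∀ i, 1 ≤ s i) (ht : ∀ j, t j ≤ 1) :
    Function.Injective (anchor ∘ pendantRep (t := t) hs) := by
  rintro (i | ⟨j, ℓ⟩) (i' | ⟨j', ℓ'⟩) h <;> simp only [Function.comp_apply, anchor, pendantRep,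
    Sum.map_inl, Sum.map_inr, Sum.inl.injEq, Sum.inr.injEq, Sigma.mk.injEq, reduceCtorEq] at h ⊢
  · exact h
  · subst h
    have : Subsingleton (Fin (t j)) := Fin.subsingleton_iff_le_one.mpr (ht j)
    exact ⟨rfl, heq_of_eq (Subsingleton.elim ℓ ℓ')⟩

theorem card_le_card_of_isIndepDomSet (hs : ∀ i, 1 ≤ s i) (ht : ∀ j, t j ≤ 1)
    {A : Finset (CWVert m n s t)} (hA : IsIndepDomSet (cwGraph m n s t B) A) :
    ∑ j, t j + m ≤ #A := by
  have hclosed : ∀ a c, a = pendantRep hs c ∨ (cwGraph m n s t B).Adj a (pendantRep hs c) →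
      anchor a = anchor (pendantRep hs c) := fun a c h =>
    h.elim (congrArg anchor) anchor_eq_of_adj_pendant
  rw [← card_block]
  exact card_le_card_of_dominating hA.2 (pendantRep hs) fun a c c' hc hc' =>
    anchor_pendantRep_injective hs ht ((hclosed a c hc).symm.trans (hclosed a c' hc'))

def domRep : Block m n t → CWVert m n s t
  | Sum.inl i => v i
  | Sum.inr ⟨j, ℓ⟩ => y j ℓ 0

theorem isIndepDomSet_image_domRep (hm : 1 ≤ m) (hconn : (bipGraph m n B).Connected) :
    IsIndepDomSet (cwGraph m n s t B) (univ.image domRep) := by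
  simp only [IsIndepDomSet, mem_image, mem_univ, true_and]
  refine ⟨?_, ?_⟩
  · rintro _ ⟨(i | ⟨j, ℓ⟩), rfl⟩ _ ⟨(i' | ⟨j', ℓ'⟩), rfl⟩ ⟨hne, h⟩ <;>
      simp only [domRep, cwRel, or_self] at h
    obtain ⟨rfl, hℓ⟩ | ⟨rfl, hℓ⟩ := h <;> exact hne (by rw [Fin.ext hℓ])
  · rintro (i | j | ⟨i, k⟩ | ⟨j, ℓ, b⟩)
    · exact Or.inl ⟨Sum.inl i, rfl⟩
    · obtain ⟨i, hij⟩ := exists_adj_of_connected hm hconn j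
      exact Or.inr ⟨v i, ⟨Sum.inl i, rfl⟩, by simp, Or.inl hij⟩
    · exact Or.inr ⟨v i, ⟨Sum.inl i, rfl⟩, by simp, Or.inl rfl⟩
    · fin_cases b
      · exact Or.inl ⟨Sum.inr ⟨j, ℓ⟩, rfl⟩
      · exact Or.inr ⟨y j ℓ 0, ⟨Sum.inr ⟨j, ℓ⟩, rfl⟩, by simp, Or.inl ⟨rfl, rfl⟩⟩

theorem card_image_domRep :
    #(univ.image (domRep : Block m n t → CWVert m n s t)) = ∑ j, t j + m := by
  rw [card_image_of_injective, card_univ, card_block]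
  rintro (i | ⟨j, ℓ⟩) (i' | ⟨j', ℓ'⟩) h <;> simp only [domRep,
    Sum.inl.injEq, Sum.inr.injEq, Sigma.mk.injEq, reduceCtorEq] at h
  · rw [h]
  · obtain ⟨rfl, hℓ⟩ := h
    simp_all

def matchEdge (hs : ∀ i, 1 ≤ s i) : Block m n t → Sym2 (CWVert m n s t)
  | Sum.inl i => s(v i, x i ⟨0, hs i⟩)
  | Sum.inr ⟨j, ℓ⟩ => s(y j ℓ 0, y j ℓ 1)

theorem matchEdge_mem_edgeSet (hs : ∀ i, 1 ≤ s i) (c : Block m n t) :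
    matchEdge hs c ∈ (cwGraph m n s t B).edgeSet := by
  rcases c with i | ⟨j, ℓ⟩ <;> simp [matchEdge, cwGraph, cwRel]

theorem eq_of_mem_matchEdge (hs : ∀ i, 1 ≤ s i) (c c' : Block m n t) (p : CWVert m n s t)
    (hp : p ∈ matchEdge hs c) (hp' : p ∈ matchEdge hs c') : c = c' := by
  rcases c with i | ⟨j, ℓ⟩ <;> rcases c' with i' | ⟨j', ℓ'⟩ <;>
    simp only [matchEdge, Sym2.mem_iff] at hp hp' <;> rcases hp with rfl | rfl <;>
    simp only [Sum.inl.injEq, Sum.inr.injEq, Sigma.mk.injEq,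
      reduceCtorEq, or_false, false_or, or_self] at hp' ⊢
  · exact hp'
  · exact hp'.1
  all_goals obtain ⟨rfl, h⟩ | ⟨rfl, h⟩ := hp' <;> simp_all

theorem isEdgeMatching_image_matchEdge [DecidableEq (CWVert m n s t)] (hs : ∀ i, 1 ≤ s i) :
    IsEdgeMatching (cwGraph m n s t B) (univ.image (matchEdge (t := t) hs)) :=
  isEdgeMatching_image _ (matchEdge_mem_edgeSet hs) (eq_of_mem_matchEdge hs)

theorem card_image_matchEdge [DecidableEq (CWVert m n s t)] (hs : ∀ i, 1 ≤ s i) :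
    #(univ.image (matchEdge (t := t) hs)) = ∑ j, t j + m :=
  (card_image_of_disjoint_edges _ (eq_of_mem_matchEdge hs)).trans card_block

def edgeFamily : Block m n t → Set (Sym2 (CWVert m n s t))
  | Sum.inl i => {e | v i ∈ e}
  | Sum.inr ⟨j, ℓ⟩ => {s(w j, y j ℓ 0), s(w j, y j ℓ 1), s(y j ℓ 0, y j ℓ 1)}

theorem edgeFamily_intersecting (c : Block m n t) :
    ∀ e ∈ (edgeFamily c : Set (Sym2 (CWVert m n s t))), ∀ e' ∈ edgeFamily c,
      ∃ p ∈ e, p ∈ e' := by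
  rcases c with i | ⟨j, ℓ⟩
  · exact fun e he e' he' => ⟨v i, he, he'⟩
  · exact fun e he e' he' => exists_mem_mem_of_mem_triangle he he'

theorem exists_mem_edgeFamily_of_cwRel {a b : CWVert m n s t} (hne : a ≠ b)
    (h : cwRel m n s t B a b) : ∃ c : Block m n t, s(a, b) ∈ edgeFamily c := by
  rcases a with i | j | ⟨i, k⟩ | ⟨j, ℓ, b₀⟩ <;>
    rcases b with i' | j' | ⟨i', k'⟩ | ⟨j', ℓ', b₁⟩ <;> simp only [cwRel] at h
  · exact ⟨Sum.inl i, by simp [edgeFamily]⟩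
  · exact ⟨Sum.inl i, by simp [edgeFamily]⟩
  · subst h
    refine ⟨Sum.inr ⟨j, ℓ'⟩, ?_⟩
    fin_cases b₁ <;> simp [edgeFamily]
  · obtain ⟨rfl, hℓ⟩ := h
    obtain rfl : ℓ = ℓ' := Fin.ext hℓ
    refine ⟨Sum.inr ⟨j, ℓ⟩, ?_⟩
    fin_cases b₀ <;> fin_cases b₁ <;> simp_all [edgeFamily, Sym2.eq_swap]

theorem exists_mem_edgeFamily (e : Sym2 (CWVert m n s t))
    (he : e ∈ (cwGraph m n s t B).edgeSet) : ∃ c : Block m n t, e ∈ edgeFamily c := by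
  induction e using Sym2.ind with
  | _ a b =>
    obtain ⟨hne, h | h⟩ := he
    · exact exists_mem_edgeFamily_of_cwRel hne h
    · rw [Sym2.eq_swap]
      exact exists_mem_edgeFamily_of_cwRel hne.symm h

theorem card_le_of_isEdgeMatching {M : Finset (Sym2 (CWVert m n s t))}
    (hM : IsEdgeMatching (cwGraph m n s t B) M) : #M ≤ ∑ j, t j + m :=
  (hM.card_le edgeFamily exists_mem_edgeFamily edgeFamily_intersecting).trans card_block.le

end CWVert

open CWVert in
theorem cwGraph_small_triangles_indepDomNumber_general (m n : ℕ) (s : Fin m → ℕ) (t : Fin n → ℕ)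
    (B : Fin m → Fin n → Prop) (hm : 1 ≤ m) (hs : ∀ i, 1 ≤ s i)
    (hconn : (bipGraph m n B).Connected) (ht : ∀ j, t j ≤ 1) :
    indepDomNumber (cwGraph m n s t B) = (∑ j, t j) + m ∧
    matchingNumber (cwGraph m n s t B) = (∑ j, t j) + m := by
  classical
  exact ⟨indepDomNumber_eq (isIndepDomSet_image_domRep hm hconn) card_image_domRep
      fun _ hA => card_le_card_of_isIndepDomSet hs ht hA,
    matchingNumber_eq (isEdgeMatching_image_matchEdge hs) (card_image_matchEdge hs)
      fun _ => card_le_of_isEdgeMatching⟩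

/-- If `G` is a Cameron–Walker graph with standard labeling and `tⱼ ≤ 1` for all `j`, then
`i(G) = ∑ tⱼ + m`, i.e. the minimum size of an independent dominating set equals the
matching number of `G`. -/
theorem cwGraph_small_triangles_indepDomNumber (m n : ℕ) (s : Fin m → ℕ) (t : Fin n → ℕ)
    (B : Fin m → Fin n → Prop) (hm : 1 ≤ m) (hn : 1 ≤ n) (hs : ∀ i, 1 ≤ s i)
    (hconn : (bipGraph m n B).Connected) (ht : ∀ j, t j ≤ 1) :
    indepDomNumber (cwGraph m n s t B) = (∑ j, t j) + m ∧
    matchingNumber (cwGraph m n s t B) = (∑ j, t j) + m :=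
  cwGraph_small_triangles_indepDomNumber_general m n s t B hm hs hconn ht
end

section
/- For integers $d \geq e \geq 2$, there exists a Cameron--Walker graph $G$ with $\dim S/I(G) = d$ and $\operatorname{depth}(S/I(G)) = e$, where $S = K[V(G)]$. Concretely: for $d > e$, take $m = e$, $n = 1$, $s_1 = \cdots = s_{e-1} = 1$, $s_e = d - e$, $t_1 = 0$; for $d = e$, take $m = d-1$, $n = 1$, all $s_i = 1$, $t_1 = 1$. In graph-theoretic terms: the maximum independent set of $G$ has size $d$ and the minimum independent dominating set has size $e$. -/
namespace CWAux

variable (m : ℕ) (s : Fin m → ℕ)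

abbrev V := CWVert m 1 s (fun _ => 1)

abbrev G : SimpleGraph (V m s) := cwGraph m 1 s (fun _ => 1) (fun _ _ => True)

/-- block map: `vᵢ` and its leaves go to `some i`, everything else to `none`. -/
def blk : V m s → Option (Fin m)
  | Sum.inl i => some i
  | Sum.inr (Sum.inl _) => none
  | Sum.inr (Sum.inr (Sum.inl p)) => some p.1
  | Sum.inr (Sum.inr (Sum.inr _)) => none

def vtx (i : Fin m) : V m s := Sum.inl i
def leaf (i : Fin m) (k : Fin (s i)) : V m s := Sum.inr (Sum.inr (Sum.inl ⟨i, k⟩))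
def tri (p : Fin 2) : V m s := Sum.inr (Sum.inr (Sum.inr ⟨0, ⟨0, Nat.one_pos⟩, p⟩))

variable {m s}

lemma adj_vtx_leaf (i : Fin m) (k : Fin (s i)) : (G m s).Adj (vtx m s i) (leaf m s i k) := by
  simp [cwGraph, cwRel, SimpleGraph.fromRel_adj, vtx, leaf]

lemma neighbor_leaf {a : V m s} {i : Fin m} {k : Fin (s i)}
    (h : (G m s).Adj a (leaf m s i k)) : a = vtx m s i := by
  rcases a with i' | j' | ⟨i', k'⟩ | ⟨j', l', p'⟩ <;>
    simp_all [cwGraph, cwRel, SimpleGraph.fromRel_adj, vtx, leaf]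

lemma neighbor_tri {a : V m s} {j ℓ p} 
    (h : (G m s).Adj a (Sum.inr (Sum.inr (Sum.inr ⟨j, ℓ, p⟩)))) : blk m s a = none := by
  rcases a with i' | j' | ⟨i', k'⟩ | ⟨j', l', p'⟩ <;>
    simp_all [cwGraph, cwRel, SimpleGraph.fromRel_adj, blk]

/-- any two distinct `blk = none` vertices are adjacent -/
lemma adj_of_blk_none {a b : V m s} (ha : blk m s a = none) (hb : blk m s b = none)
    (hab : a ≠ b) : (G m s).Adj a b := by
  refine (SimpleGraph.fromRel_adj _ _ _).mpr ⟨hab, ?_⟩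
  rcases a with i | j | ⟨i, k⟩ | ⟨j, l, p⟩ <;> rcases b with i' | j' | ⟨i', k'⟩ | ⟨j', l', p'⟩ <;>
      simp only [blk] at ha hb
  all_goals try exact (Option.some_ne_none _ ha).elim
  all_goals try exact (Option.some_ne_none _ hb).elim
  · exact absurd (congrArg (fun j => (Sum.inr (Sum.inl j) : V m s)) (Subsingleton.elim j j')) hab
  · exact Or.inl (by simp [cwRel, Subsingleton.elim j j'])
  · exact Or.inr (by simp [cwRel, Subsingleton.elim j' j])
  · exact Or.inl ⟨Subsingleton.elim j j', congrArg Fin.val (Subsingleton.elim l l')⟩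

lemma blk_leaf (i : Fin m) (k : Fin (s i)) : blk m s (leaf m s i k) = some i := rfl
lemma blk_vtx (i : Fin m) : blk m s (vtx m s i) = some i := rfl
lemma blk_tri (p : Fin 2) : blk m s (tri m s p) = none := rfl

lemma fiber_card_le (hs : ∀ i, 1 ≤ s i) (A : Finset (V m s))
    (hA : ∀ a ∈ A, ∀ b ∈ A, ¬ (G m s).Adj a b) (b : Option (Fin m)) :
    (A.filter fun x => blk m s x = b).card ≤ Option.elim b 1 s := by
  match b with
  | none =>
    refine Finset.card_le_one.mpr fun a ha c hc => ?_
    rw [Finset.mem_filter] at ha hc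
    by_contra hne
    exact hA a ha.1 c hc.1 (adj_of_blk_none ha.2 hc.2 hne)
  | some i =>
    by_cases hv : vtx m s i ∈ A
    · have key : ∀ x ∈ A.filter (fun x => blk m s x = some i), x = vtx m s i := by
        intro x hx
        rw [Finset.mem_filter] at hx
        rcases hx with ⟨hxA, hxb⟩
        rcases x with i' | j' | ⟨i', k'⟩ | r
        · exact congrArg Sum.inl (Option.some.inj hxb)
        · exact absurd hxb (by simp [blk])
        · have hi : i' = i := Option.some.inj hxb
          subst hi
          exact absurd (adj_vtx_leaf i' k') (hA _ hv _ hxA)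
        · exact absurd hxb (by simp [blk])
      refine le_trans (Finset.card_le_one.mpr fun a ha c hc => ?_) (hs i)
      rw [key a ha, key c hc]
    · calc (A.filter fun x => blk m s x = some i).card
          ≤ (Finset.univ.image (leaf m s i)).card := by
            refine Finset.card_le_card fun x hx => ?_
            rw [Finset.mem_filter] at hx
            rcases hx with ⟨hxA, hxb⟩
            rcases x with i' | j' | ⟨i', k'⟩ | r
            · have hi : i' = i := Option.some.inj hxb
              exact absurd (hi ▸ hxA) hv
            · exact absurd hxb (by simp [blk])
            · have hi : i' = i := Option.some.inj hxb
              subst hi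
              exact Finset.mem_image.mpr ⟨k', Finset.mem_univ _, rfl⟩
            · exact absurd hxb (by simp [blk])
        _ ≤ (Finset.univ : Finset (Fin (s i))).card := Finset.card_image_le
        _ = s i := by simp

lemma card_le_of_indep (hs : ∀ i, 1 ≤ s i) (A : Finset (V m s))
    (hA : ∀ a ∈ A, ∀ b ∈ A, ¬ (G m s).Adj a b) : A.card ≤ (∑ i, s i) + 1 := by
  have hcard : A.card = ∑ b : Option (Fin m), (A.filter fun x => blk m s x = b).card :=
    Finset.card_eq_sum_card_fiberwise (fun x _ => Finset.mem_univ _)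
  rw [hcard, Fintype.sum_option]
  have h1 := fiber_card_le hs A hA none
  have h2 : ∑ i : Fin m, (A.filter fun x => blk m s x = some i).card ≤ ∑ i, s i :=
    Finset.sum_le_sum fun i _ => fiber_card_le hs A hA (some i)
  simp only [Option.elim] at h1
  omega

variable (m s) in
def bigA : Finset (V m s) :=
  (Finset.univ.image fun p : Σ i : Fin m, Fin (s i) => (Sum.inr (Sum.inr (Sum.inl p)) : V m s))
    ∪ {tri m s 0}

lemma bigA_card : (bigA m s).card = (∑ i, s i) + 1 := by
  rw [bigA, Finset.card_union_of_disjoint (by simp [tri]),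
    Finset.card_image_of_injective _ (fun x y h => by simpa using h)]
  simp

lemma bigA_indep : ∀ a ∈ bigA m s, ∀ b ∈ bigA m s, ¬ (G m s).Adj a b := by
  intro a ha b hb
  rw [bigA, Finset.mem_union] at ha hb
  rcases ha with ha | ha <;> rcases hb with hb | hb
  · obtain ⟨⟨i, k⟩, -, rfl⟩ := Finset.mem_image.mp ha
    obtain ⟨⟨i', k'⟩, -, rfl⟩ := Finset.mem_image.mp hb
    simp [cwGraph, cwRel, SimpleGraph.fromRel_adj]
  · obtain ⟨⟨i, k⟩, -, rfl⟩ := Finset.mem_image.mp ha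
    rw [Finset.mem_singleton] at hb; subst hb
    simp [cwGraph, cwRel, SimpleGraph.fromRel_adj, tri]
  · obtain ⟨⟨i, k⟩, -, rfl⟩ := Finset.mem_image.mp hb
    rw [Finset.mem_singleton] at ha; subst ha
    simp [cwGraph, cwRel, SimpleGraph.fromRel_adj, tri]
  · rw [Finset.mem_singleton] at ha hb; subst ha; subst hb
    exact SimpleGraph.irrefl _

lemma indepNumber_eq (hs : ∀ i, 1 ≤ s i) : indepNumber (G m s) = (∑ i, s i) + 1 := by
  apply le_antisymm
  · refine csSup_le ⟨0, ∅, by simp, rfl⟩ ?_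
    rintro k ⟨A, hA, rfl⟩
    exact card_le_of_indep hs A hA
  · refine le_csSup ⟨(∑ i, s i) + 1, ?_⟩ ⟨bigA m s, bigA_indep, bigA_card⟩
    rintro k ⟨A, hA, rfl⟩
    exact card_le_of_indep hs A hA

variable (m s) in
def domA : Finset (V m s) :=
  (Finset.univ.image (Sum.inl : Fin m → V m s)) ∪ {tri m s 0}

lemma domA_card : (domA m s).card = m + 1 := by
  rw [domA, Finset.card_union_of_disjoint (by simp [tri]),
    Finset.card_image_of_injective _ Sum.inl_injective]
  simp

lemma domA_isIndepDom (hm : 0 < m) : IsIndepDomSet (G m s) (domA m s) := by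
  constructor
  · intro a ha b hb
    rw [domA, Finset.mem_union] at ha hb
    rcases ha with ha | ha <;> rcases hb with hb | hb
    · obtain ⟨i, -, rfl⟩ := Finset.mem_image.mp ha
      obtain ⟨i', -, rfl⟩ := Finset.mem_image.mp hb
      simp [cwGraph, cwRel, SimpleGraph.fromRel_adj]
    · obtain ⟨i, -, rfl⟩ := Finset.mem_image.mp ha
      rw [Finset.mem_singleton] at hb; subst hb
      simp [cwGraph, cwRel, SimpleGraph.fromRel_adj, tri]
    · obtain ⟨i, -, rfl⟩ := Finset.mem_image.mp hb
      rw [Finset.mem_singleton] at ha; subst ha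
      simp [cwGraph, cwRel, SimpleGraph.fromRel_adj, tri]
    · rw [Finset.mem_singleton] at ha hb; subst ha; subst hb
      exact SimpleGraph.irrefl _
  · intro v
    have htri_mem : tri m s 0 ∈ domA m s := by
      rw [domA, Finset.mem_union]; exact Or.inr (Finset.mem_singleton_self _)
    have hvtx_mem : ∀ i : Fin m, (Sum.inl i : V m s) ∈ domA m s := fun i => by
      rw [domA, Finset.mem_union]
      exact Or.inl (Finset.mem_image.mpr ⟨i, Finset.mem_univ _, rfl⟩)
    rcases v with i | j | ⟨i, k⟩ | ⟨j, l, p⟩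
    · exact Or.inl (hvtx_mem i)
    · refine Or.inr ⟨Sum.inl ⟨0, hm⟩, hvtx_mem _, ?_⟩
      exact (SimpleGraph.fromRel_adj _ _ _).mpr ⟨by simp, Or.inl trivial⟩
    · exact Or.inr ⟨Sum.inl i, hvtx_mem i, adj_vtx_leaf i k⟩
    · by_cases hp : Sum.inr (Sum.inr (Sum.inr ⟨j, l, p⟩)) = tri m s 0
      · exact Or.inl (hp ▸ htri_mem)
      · refine Or.inr ⟨tri m s 0, htri_mem, ?_⟩
        refine (SimpleGraph.fromRel_adj _ _ _).mpr ⟨fun h => hp h.symm, Or.inl ?_⟩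
        exact ⟨Subsingleton.elim _ _, congrArg Fin.val (Subsingleton.elim _ _)⟩

lemma le_card_of_indepDom (hs : ∀ i, 1 ≤ s i) (A : Finset (V m s))
    (hA : IsIndepDomSet (G m s) A) : m + 1 ≤ A.card := by
  have hcard : A.card = ∑ b : Option (Fin m), (A.filter fun x => blk m s x = b).card :=
    Finset.card_eq_sum_card_fiberwise (fun x _ => Finset.mem_univ _)
  have hfib : ∀ b : Option (Fin m), 1 ≤ (A.filter fun x => blk m s x = b).card := by
    intro b
    rw [Nat.one_le_iff_ne_zero, Ne, Finset.card_eq_zero, ← Ne,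
      ← Finset.nonempty_iff_ne_empty]
    match b with
    | some i =>
      rcases hA.2 (leaf m s i ⟨0, hs i⟩) with h | ⟨a, haA, hadj⟩
      · exact ⟨_, Finset.mem_filter.mpr ⟨h, rfl⟩⟩
      · have := neighbor_leaf hadj
        subst this
        exact ⟨_, Finset.mem_filter.mpr ⟨haA, rfl⟩⟩
    | none =>
      rcases hA.2 (tri m s 0) with h | ⟨a, haA, hadj⟩
      · exact ⟨_, Finset.mem_filter.mpr ⟨h, rfl⟩⟩
      · exact ⟨_, Finset.mem_filter.mpr ⟨haA, neighbor_tri hadj⟩⟩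
  calc m + 1 = ∑ _b : Option (Fin m), 1 := by simp
    _ ≤ _ := Finset.sum_le_sum fun b _ => hfib b
    _ = A.card := hcard.symm

lemma indepDomNumber_eq (hm : 0 < m) (hs : ∀ i, 1 ≤ s i) :
    indepDomNumber (G m s) = m + 1 := by
  apply le_antisymm
  · exact Nat.sInf_le ⟨domA m s, domA_isIndepDom hm, domA_card⟩
  · refine le_csInf ⟨m + 1, domA m s, domA_isIndepDom hm, domA_card⟩ ?_
    rintro k ⟨A, hA, rfl⟩
    exact le_card_of_indepDom hs A hA

lemma bip_connected (_hm : 0 < m) : (bipGraph m 1 fun _ _ => True).Connected := by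
  have key : ∀ a, (bipGraph m 1 fun _ _ => True).Reachable a (Sum.inr 0) := by
    intro a
    rcases a with i | j
    · exact ((SimpleGraph.fromRel_adj _ _ _).mpr ⟨by simp, Or.inl trivial⟩ :
        (bipGraph m 1 fun _ _ => True).Adj (Sum.inl i) (Sum.inr 0)).reachable
    · rw [Subsingleton.elim j 0]
  rw [SimpleGraph.connected_iff]
  exact ⟨fun a b => (key a).trans (key b).symm, ⟨Sum.inr 0⟩⟩

lemma sum_ite_zero (m a : ℕ) (hm : 0 < m) :
    ∑ i : Fin m, (if (i : ℕ) = 0 then a else 1) = a + (m - 1) := by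
  obtain ⟨k, rfl⟩ := Nat.exists_eq_succ_of_ne_zero hm.ne'
  rw [Fin.sum_univ_succ]
  simp

end CWAux

/-- For integers `d ≥ e ≥ 2` there exists a Cameron–Walker graph `G` with
`dim S/I(G) = d` and `depth S/I(G) = e`; in graph-theoretic terms, the maximum
independent set of `G` has size `d` and the minimum independent dominating set has
size `e`. -/
theorem exists_cwGraph_dim_depth (d e : ℕ) (hde : e ≤ d) (he : 2 ≤ e) :
    ∃ (m n : ℕ) (s : Fin m → ℕ) (t : Fin n → ℕ) (B : Fin m → Fin n → Prop),
      1 ≤ m ∧ 1 ≤ n ∧ (∀ i, 1 ≤ s i) ∧ (bipGraph m n B).Connected ∧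
      (2 ≤ m ∨ ∃ j, 0 < t j) ∧
      indepNumber (cwGraph m n s t B) = d ∧
      indepDomNumber (cwGraph m n s t B) = e := by
  have hm : 0 < e - 1 := by omega
  have hs : ∀ i : Fin (e - 1), 1 ≤ (if (i : ℕ) = 0 then d - e + 1 else 1) := fun i => by
    by_cases h : (i : ℕ) = 0 <;> simp [h]
  refine ⟨e - 1, 1, fun i => if (i : ℕ) = 0 then d - e + 1 else 1, fun _ => 1,
    fun _ _ => True, hm, le_refl 1, hs, CWAux.bip_connected hm,
    Or.inr ⟨0, Nat.one_pos⟩, ?_, ?_⟩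
  · have h1 := CWAux.indepNumber_eq (m := e - 1)
      (s := fun i => if (i : ℕ) = 0 then d - e + 1 else 1) hs
    have h2 := CWAux.sum_ite_zero (e - 1) (d - e + 1) hm
    exact h1.trans (by rw [h2]; omega)
  · exact (CWAux.indepDomNumber_eq hm hs).trans (by omega)
end

section
/- Let $G$ be a Cameron--Walker graph with standard labeling. Then $\deg h(S/I(G), \lambda) \geq \operatorname{reg}(S/I(G))$, with equality if and only if $s_i = 1$ for all $1 \leq i \leq m$ and $t_j \geq 1$ for all $1 \leq j \leq n$. Equivalently, in combinatorial terms: $\sum_{i=1}^m s_i + \sum_{j=1}^n \max\{t_j, 1\} \geq \sum_{j=1}^n t_j + m$, with equality iff all $s_i = 1$ and all $t_j \geq 1$. -/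
/-- For a Cameron–Walker graph `G` with standard labeling,
`deg h(S/I(G), λ) ≥ reg S/I(G)`, with equality iff `sᵢ = 1` for all `i` and `tⱼ ≥ 1`
for all `j`.  In combinatorial terms (using
`deg h(S/I(G),λ) = ∑ sᵢ + ∑ max{tⱼ,1}` and `reg S/I(G) = ∑ tⱼ + m`):
`∑ sᵢ + ∑ max{tⱼ,1} ≥ ∑ tⱼ + m`, with equality iff all `sᵢ = 1` and all `tⱼ ≥ 1`. -/
theorem cwGraph_deg_h_ge_reg (m n : ℕ) (s : Fin m → ℕ) (t : Fin n → ℕ)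
    (hs : ∀ i, 1 ≤ s i) :
    (∑ j, t j) + m ≤ (∑ i, s i) + ∑ j, max (t j) 1 ∧
    ((∑ i, s i) + (∑ j, max (t j) 1) = (∑ j, t j) + m ↔
      (∀ i, s i = 1) ∧ ∀ j, 1 ≤ t j) := by
  have hs_le : ∑ _i : Fin m, 1 ≤ ∑ i, s i := Finset.sum_le_sum fun i _ => hs i
  have ht_le : ∑ j, t j ≤ ∑ j, max (t j) 1 := Finset.sum_le_sum fun j _ => le_max_left _ _
  have eq_iff : (∑ _i : Fin m, 1) + ∑ j, t j = (∑ i, s i) + ∑ j, max (t j) 1 ↔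
      (∀ i, 1 = s i) ∧ ∀ j, t j = max (t j) 1 := by
    rw [add_eq_add_iff_eq_and_eq hs_le ht_le,
      Finset.sum_eq_sum_iff_of_le fun i _ => hs i,
      Finset.sum_eq_sum_iff_of_le fun j _ => le_max_left _ _]
    simp only [Finset.mem_univ, forall_const]
  simp only [Fin.sum_const, smul_eq_mul, mul_one] at hs_le eq_iff
  refine ⟨by omega, ?_⟩
  rw [eq_comm, add_comm (∑ j, t j), eq_iff]
  simp only [eq_comm (a := 1), eq_comm (a := t _), max_eq_left_iff]
end
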